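/- arXiv:1205.6071 — 5 statements merged into one kernel-verified Lean document; each statement's English description precedes it below -/
import Mathlib

section
/- In a comparability digraph (an acyclic, transitive digraph), every stable set is sink-stable, i.e., there exist pairwise edge-disjoint directed cuts whose reorientation turns every element of the stable set into a sink. -/
open scoped BigOperators

noncomputable section

variable {V : Type*}

/-- No edge of `A` leaves `Z`. -/
def NoLeaving (A : Set (V × V)) (Z : Set V) : Prop :=
  ∀ e ∈ A, e.1 ∈ Z → e.2 ∈ Z

/-- The set of edges of `A` entering `Z`. -/
def dicutOf (A : Set (V × V)) (Z : Set V) : Set (V × V) :=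
  {e ∈ A | e.2 ∈ Z ∧ e.1 ∉ Z}

/-- `B` is a directed cut of the digraph with edge set `A`. -/
def IsDicut (A B : Set (V × V)) : Prop :=
  ∃ Z : Set V, NoLeaving A Z ∧ B = dicutOf A Z

/-- `F` is the union of pairwise disjoint dicuts of `A`. -/
def IsDisjointDicutUnion (A F : Set (V × V)) : Prop :=
  ∃ 𝓑 : Set (Set (V × V)), (∀ B ∈ 𝓑, IsDicut A B) ∧
    𝓑.Pairwise Disjoint ∧ F = ⋃₀ 𝓑

/-- The digraph obtained from `A` by reversing the edges of `F`. -/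
def rev (A F : Set (V × V)) : Set (V × V) :=
  (A \ F) ∪ Prod.swap '' F

/-- `v` is a sink of the digraph `A`: no edge leaves `v`. -/
def IsSinkIn (A : Set (V × V)) (v : V) : Prop := ∀ u, (v, u) ∉ A

/-- `S` is a stable set of the digraph `A`. -/
def Stable (A : Set (V × V)) (S : Set V) : Prop :=
  ∀ u ∈ S, ∀ v ∈ S, (u, v) ∉ A

/-- `S` is sink-stable: there are pairwise disjoint dicuts whose reorientation
turns every element of `S` into a sink. -/
def SinkStable (A : Set (V × V)) (S : Set V) : Prop :=
  ∃ F, IsDisjointDicutUnion A F ∧ ∀ s ∈ S, IsSinkIn (rev A F) s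

/-- `S` is `F`-stable : sink-stable in the digraph where `F` is reversed. -/
def FStable (A F : Set (V × V)) (S : Set V) : Prop :=
  SinkStable (rev A F) S

/-- A circuit of the digraph `A`: a cycle of the underlying undirected graph,
with a fixed traversal direction; `dir i = true` iff the `i`-th edge is a
forward edge. -/
structure Circuit (A : Set (V × V)) where
  n : ℕ
  hn : 2 ≤ n
  f : ZMod n → V
  inj : Function.Injective f
  dir : ZMod n → Bool
  mem : ∀ i : ZMod n, (if dir i then (f i, f (i + 1)) else (f (i + 1), f i)) ∈ A
  edge_inj : Function.Injective
    (fun i : ZMod n => if dir i then (f i, f (i + 1)) else (f (i + 1), f i))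

namespace Circuit

variable {A : Set (V × V)}

/-- The edge of the digraph used at step `i` of the circuit. -/
def edge (C : Circuit A) (i : ZMod C.n) : V × V :=
  if C.dir i then (C.f i, C.f (i + 1)) else (C.f (i + 1), C.f i)

/-- The node set of the circuit. -/
def verts (C : Circuit A) : Set V := Set.range C.f

/-- The number of forward edges of `C` lying in `F`. -/
def fwdCount (C : Circuit A) (F : Set (V × V)) : ℕ :=
  {i : ZMod C.n | C.dir i = true ∧ C.edge i ∈ F}.ncard

/-- The number of backward edges of `C` lying in `F`. -/
def bwdCount (C : Circuit A) (F : Set (V × V)) : ℕ :=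
  {i : ZMod C.n | C.dir i = false ∧ C.edge i ∈ F}.ncard

/-- The number of forward edges of `C`. -/
def fwd (C : Circuit A) : ℕ := {i : ZMod C.n | C.dir i = true}.ncard

/-- The number of backward edges of `C`. -/
def bwd (C : Circuit A) : ℕ := {i : ZMod C.n | C.dir i = false}.ncard

/-- `η(C)`, the minimum of the numbers of forward and backward edges. -/
def eta (C : Circuit A) : ℕ := min C.fwd C.bwd

end Circuit

/-- A directed circuit (di-circuit) of the digraph `A`. -/
structure DiCircuit (A : Set (V × V)) where
  n : ℕ
  hn : 2 ≤ n
  f : ZMod n → V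
  inj : Function.Injective f
  mem : ∀ i : ZMod n, (f i, f (i + 1)) ∈ A

namespace DiCircuit

variable {A : Set (V × V)}

/-- The node set of the di-circuit. -/
def verts (K : DiCircuit A) : Set V := Set.range K.f

/-- The edge set of the di-circuit. -/
def edges (K : DiCircuit A) : Set (V × V) :=
  {e | ∃ i : ZMod K.n, e = (K.f i, K.f (i + 1))}

/-- The total `c`-cost of the edges of the di-circuit. -/
def cost (K : DiCircuit A) (c : V × V → ℕ) : ℕ :=
  ∑ i ∈ Finset.range K.n, c (K.f (i : ZMod K.n), K.f ((i : ZMod K.n) + 1))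

/-- The sum of `z` over the nodes of the di-circuit. -/
def vsum (K : DiCircuit A) (z : V → ℕ) : ℕ :=
  ∑ i ∈ Finset.range K.n, z (K.f (i : ZMod K.n))

end DiCircuit

/-- The digraph `A` is acyclic: it has no closed directed walk. -/
def Acyclic (A : Set (V × V)) : Prop :=
  ∀ (p : ℕ → V) (m : ℕ), 0 < m → (∀ i < m, (p i, p (i + 1)) ∈ A) → p m ≠ p 0

/-- The digraph `A` is strongly connected. -/
def StronglyConnected (A : Set (V × V)) : Prop :=
  ∀ u v : V, Relation.ReflTransGen (fun x y => (x, y) ∈ A) u v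

/-- `F` is flat: every cyclic edge of `A` lies on a di-circuit containing
exactly one element of `F`. -/
def Flat (A F : Set (V × V)) : Prop :=
  ∀ e ∈ A, (∃ K : DiCircuit A, e ∈ K.edges) →
    ∃ K : DiCircuit A, e ∈ K.edges ∧ (K.edges ∩ F).ncard = 1

/-- `F` is a transversal of di-circuits: it meets every di-circuit. -/
def Transversal (A F : Set (V × V)) : Prop :=
  ∀ K : DiCircuit A, (K.edges ∩ F).Nonempty

/-- In a comparability digraph (acyclic and transitive),
every stable set is sink-stable. -/
theorem stmt0 [Fintype V] (A : Set (V × V)) (hacyc : Acyclic A)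
    (htrans : ∀ u v w : V, (u, v) ∈ A → (v, w) ∈ A → (u, w) ∈ A)
    (S : Set V) (hS : Stable A S) : SinkStable A S := by
  set Z : Set V := {v | ∃ s ∈ S, (s, v) ∈ A} with hZ
  have hSZ : ∀ s ∈ S, s ∉ Z := by
    rintro s hs ⟨t, ht, hts⟩
    exact hS t ht s hs hts
  refine ⟨dicutOf A Z, ⟨{dicutOf A Z}, ?_, ?_, ?_⟩, ?_⟩
  · rintro B hB
    rw [Set.mem_singleton_iff] at hB
    subst hB
    refine ⟨Z, ?_, rfl⟩
    rintro ⟨u, v⟩ he ⟨s, hs, hsu⟩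
    exact ⟨s, hs, htrans s u v hsu he⟩
  · exact Set.pairwise_singleton _ _
  · simp
  · rintro s hs u hu
    rcases hu with ⟨he, hnF⟩ | ⟨e, heF, heq⟩
    · exact hnF ⟨he, ⟨s, hs, he⟩, hSZ s hs⟩
    · rcases heF with ⟨_, huZ, _⟩
      have : e.1 = u ∧ e.2 = s := by
        have := congrArg Prod.fst heq
        have h2 := congrArg Prod.snd heq
        simp [Prod.swap] at this h2
        exact ⟨h2, this⟩
      exact hSZ s hs (this.2 ▸ huZ)
end
end

section
/- If D' arises from D by a sequence of digraphs D_0 = D, D_1, ..., D_q = D' where each D_i is obtained from D_{i−1} by reorienting a dicut of D_{i−1}, then the set of edges of D reversed in D' is a union of pairwise disjoint dicuts of D (i.e., dicut equivalence is transitive / closed under composition). -/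
open scoped BigOperators

noncomputable section

variable {V : Type*}

-- auxiliary lemmas start here
open scoped Classical
lemma mem_rev' (C D : Set (V × V)) (x : V × V) :
    x ∈ rev C D ↔ (x ∈ C ∧ x ∉ D) ∨ x.swap ∈ D := by
  simp [rev, Set.image_swap_eq_preimage_swap]

lemma pot_union (A F : Set (V × V)) (π : V → ℤ) (hF : F ⊆ A)
    (hπ : ∀ e ∈ A, π e.2 - π e.1 = if e ∈ F then 1 else 0) :
    IsDisjointDicutUnion A F := by
  have hmono : ∀ e ∈ A, π e.1 ≤ π e.2 ∧ π e.2 ≤ π e.1 + 1 := by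
    intro e he
    have := hπ e he
    split_ifs at this <;> omega
  refine ⟨{B | ∃ j : ℤ, B = dicutOf A {v | j ≤ π v}}, ?_, ?_, ?_⟩
  · rintro B ⟨j, rfl⟩
    refine ⟨_, ?_, rfl⟩
    intro e he h1
    simp only [Set.mem_setOf_eq] at h1 ⊢
    exact le_trans h1 (hmono e he).1
  · rintro B ⟨j, rfl⟩ C ⟨k, rfl⟩ hne
    rw [Set.disjoint_left]
    rintro e ⟨heA, he2, he1⟩ ⟨_, hk2, hk1⟩
    apply hne
    have hjk : j = k := by
      simp only [Set.mem_setOf_eq] at he1 he2 hk1 hk2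
      have := (hmono e heA).2
      omega
    rw [hjk]
  · ext e
    simp only [Set.mem_sUnion, Set.mem_setOf_eq]
    constructor
    · intro he
      refine ⟨dicutOf A {v | π e.2 ≤ π v}, ⟨π e.2, rfl⟩, hF he, by simp, ?_⟩
      have := hπ e (hF he)
      simp only [he, if_pos] at this
      simp only [Set.mem_setOf_eq]
      omega
    · rintro ⟨B, ⟨j, rfl⟩, heA, he2, he1⟩
      simp only [Set.mem_setOf_eq] at he1 he2
      have := hπ e heA
      split_ifs at this with hf
      · exact hf
      · omega

set_option maxHeartbeats 2000000 in
lemma step_lemma (A F : Set (V × V)) (π : V → ℤ) (hF : F ⊆ A)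
    (hπ : ∀ e ∈ A, π e.2 - π e.1 = if e ∈ F then 1 else 0)
    (B : Set (V × V)) (hB : IsDicut (rev A F) B) :
    ∃ (F' : Set (V × V)) (π' : V → ℤ), F' ⊆ A ∧
      (∀ e ∈ A, π' e.2 - π' e.1 = if e ∈ F' then (1 : ℤ) else 0) ∧
      rev (rev A F) B = rev A F' := by
  obtain ⟨Z, hZ, rfl⟩ := hB
  have hFa : ∀ e ∈ F, e.swap ∉ A := by
    intro e he hsw
    have h1 := hπ e (hF he)
    have h2 := hπ e.swap hsw
    simp only [he, if_pos, Prod.fst_swap, Prod.snd_swap] at h1 h2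
    split_ifs at h2 <;> omega
  set B := dicutOf (rev A F) Z with hBdef
  have hmemB : ∀ x, x ∈ B ↔ x ∈ rev A F ∧ x.2 ∈ Z ∧ x.1 ∉ Z := by
    intro x; rfl
  refine ⟨{e | e ∈ A ∧ ((e ∈ F ∧ e.swap ∉ B) ∨ (e ∉ F ∧ e ∈ B))},
    fun v => π v + (if v ∈ Z then 1 else 0), fun e he => he.1, ?_, ?_⟩
  · intro e he
    by_cases hf : e ∈ F
    · have hswA' : e.swap ∈ rev A F := (mem_rev' A F e.swap).2 (Or.inr (by simpa using hf))
      have hkey := hZ e.swap hswA'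
      simp only [Prod.fst_swap, Prod.snd_swap] at hkey
      have hπe := hπ e he; simp only [hf, if_pos] at hπe
      have hswB : e.swap ∈ B ↔ e.1 ∈ Z ∧ e.2 ∉ Z := by
        rw [hmemB]; simp [hswA', and_comm]
      by_cases hb : e.swap ∈ B
      · have hin : e ∉ {e | e ∈ A ∧ ((e ∈ F ∧ e.swap ∉ B) ∨ (e ∉ F ∧ e ∈ B))} := by
          intro hc
          rcases hc.2 with ⟨_, h⟩ | ⟨h, _⟩ <;> [exact h hb; exact h hf]
        obtain ⟨h1, h2⟩ := hswB.1 hb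
        simp only [hin, if_neg, h1, if_pos, h2]
        omega
      · have hin : e ∈ {e | e ∈ A ∧ ((e ∈ F ∧ e.swap ∉ B) ∨ (e ∉ F ∧ e ∈ B))} :=
          ⟨he, Or.inl ⟨hf, hb⟩⟩
        rw [hswB] at hb
        push_neg at hb
        simp only [hin, if_pos]
        by_cases h2 : e.2 ∈ Z
        · have h1 := hkey h2
          simp only [h1, h2, if_pos]; omega
        · have h1 : e.1 ∉ Z := fun hc => h2 (hb hc)
          simp only [h1, h2, if_neg, not_false_iff]; omega
    · have hA' : e ∈ rev A F := (mem_rev' A F e).2 (Or.inl ⟨he, hf⟩)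
      have hkey := hZ e hA'
      have hπe := hπ e he; simp only [hf, if_neg, not_false_iff] at hπe
      have heB : e ∈ B ↔ e.2 ∈ Z ∧ e.1 ∉ Z := by rw [hmemB]; simp [hA']
      by_cases hb : e ∈ B
      · have hin : e ∈ {e | e ∈ A ∧ ((e ∈ F ∧ e.swap ∉ B) ∨ (e ∉ F ∧ e ∈ B))} :=
          ⟨he, Or.inr ⟨hf, hb⟩⟩
        obtain ⟨h2, h1⟩ := heB.1 hb
        simp only [hin, if_pos, h1, h2, if_neg, not_false_iff]
        omega
      · have hin : e ∉ {e | e ∈ A ∧ ((e ∈ F ∧ e.swap ∉ B) ∨ (e ∉ F ∧ e ∈ B))} := by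
          intro hc
          rcases hc.2 with ⟨h, _⟩ | ⟨_, h⟩ <;> [exact hf h; exact hb h]
        rw [heB] at hb; push_neg at hb
        simp only [hin, if_neg, not_false_iff]
        by_cases h1 : e.1 ∈ Z
        · have h2 := hkey h1
          simp only [h1, h2, if_pos]; omega
        · have h2 : e.2 ∉ Z := fun hc => h1 (hb hc)
          simp only [h1, h2, if_neg, not_false_iff]; omega
  · -- set equality
    have hBa : ∀ e ∈ B, e.swap ∉ rev A F := by
      intro e heb hsw
      rw [hmemB] at heb
      have := hZ e.swap hsw
      simp only [Prod.fst_swap, Prod.snd_swap] at this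
      exact heb.2.2 (this heb.2.1)
    ext x
    rw [mem_rev' (rev A F) B x, mem_rev' A F x, mem_rev' A _ x]
    simp only [Set.mem_setOf_eq, Prod.swap_swap]
    -- facts at x and x.swap
    have f1 : x ∈ F → x.swap ∉ A := hFa x
    have f2 : x.swap ∈ F → x ∉ A := fun h => by simpa using hFa x.swap h
    have f3 : x ∈ B → (x ∈ A ∧ x ∉ F) ∨ x.swap ∈ F := fun h =>
      (mem_rev' A F x).1 ((hmemB x).1 h).1
    have f4 : x.swap ∈ B → (x.swap ∈ A ∧ x.swap ∉ F) ∨ x ∈ F := fun h => by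
      have := (mem_rev' A F x.swap).1 ((hmemB x.swap).1 h).1
      simpa using this
    have f5 : x ∈ B → x.swap ∉ rev A F := hBa x
    have f6 : x.swap ∈ B → x ∉ rev A F := fun h => by simpa using hBa x.swap h
    rw [mem_rev' A F] at f5 f6
    have f7 : x ∈ F → x ∈ A := fun h => hF h
    have f8 : x.swap ∈ F → x.swap ∈ A := fun h => hF h
    tauto


/-- if `g q` arises from `g 0` by a sequence of reorientations,
each reversing a dicut of the current digraph, then the set of edges of `g 0`
reversed overall is a union of pairwise disjoint dicuts of `g 0`. -/
theorem stmt5 [Fintype V] (q : ℕ) (g : ℕ → Set (V × V))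
    (h : ∀ i < q, ∃ B, IsDicut (g i) B ∧ g (i + 1) = rev (g i) B) :
    ∃ F ⊆ g 0, IsDisjointDicutUnion (g 0) F ∧ g q = rev (g 0) F := by

  have key : ∀ i ≤ q, ∃ (F : Set (V × V)) (π : V → ℤ), F ⊆ g 0 ∧
      (∀ e ∈ g 0, π e.2 - π e.1 = if e ∈ F then (1 : ℤ) else 0) ∧
      g i = rev (g 0) F := by
    intro i
    induction i with
    | zero => exact fun _ => ⟨∅, 0, by simp, by simp, by simp [rev]⟩
    | succ n ih =>
      intro hle
      obtain ⟨F, π, h1, h2, h3⟩ := ih (by omega)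
      obtain ⟨B, hB, hstep⟩ := h n (by omega)
      rw [h3] at hB hstep
      obtain ⟨F', π', hsub, hprop, heq⟩ := step_lemma (g 0) F π h1 h2 B hB
      exact ⟨F', π', hsub, hprop, by rw [hstep, heq]⟩
  obtain ⟨F, π, h1, h2, h3⟩ := key q le_rfl
  exact ⟨F, h1, pot_union _ _ π h1 h2, h3⟩
end
end

section
/- A stable set S in a digraph D is sink-stable if and only if |S ∩ V(C)| ≤ η(C) for every circuit C of D, where η(C) = min(number of forward edges of C, number of backward edges of C). -/
open scoped BigOperators

noncomputable section

variable {V : Type*}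

section SinkStableAux

lemma ncard_setOf_cast {α : Type*} [Fintype α] (p : α → Prop) [DecidablePred p] :
    ({x | p x}.ncard : ℤ) = ∑ x : α, if p x then 1 else 0 := by
  classical
  calc ({x | p x}.ncard : ℤ) = ((Finset.univ.filter p).card : ℤ) := by
        rw [Set.ncard_eq_toFinset_card']
        congr 1
        rw [Set.toFinset_setOf]
  _ = ∑ x : α, if p x then (1:ℤ) else 0 := by rw [Finset.card_filter]; push_cast; rfl

lemma zmod_telescope {n : ℕ} [NeZero n] (g : ZMod n → ℤ) :
    ∑ i : ZMod n, (g (i + 1) - g i) = 0 := by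
  rw [Finset.sum_sub_distrib,
    Fintype.sum_equiv (Equiv.addRight (1 : ZMod n)) (fun i => g (i + 1)) g (fun i => rfl)]
  exact sub_self _
open Classical in
/-- signed indicator of edge `i` of `C` lying in `G`. -/
noncomputable def chi {A : Set (V × V)} (C : Circuit A) (G : Set (V × V)) (i : ZMod C.n) : ℤ :=
  if C.edge i ∈ G then (if C.dir i then 1 else -1) else 0

lemma chi_of_mem {A : Set (V × V)} {C : Circuit A} {G : Set (V × V)} {i : ZMod C.n}
    (h : C.edge i ∈ G) : chi C G i = if C.dir i then 1 else -1 := by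
  rw [chi, if_pos h]

lemma chi_of_not_mem {A : Set (V × V)} {C : Circuit A} {G : Set (V × V)} {i : ZMod C.n}
    (h : C.edge i ∉ G) : chi C G i = 0 := by
  rw [chi, if_neg h]

open Classical in
lemma chi_dicut {A : Set (V × V)} (C : Circuit A) {Z : Set V} (hZ : NoLeaving A Z) (i : ZMod C.n) :
    chi C (dicutOf A Z) i
      = (if C.f (i + 1) ∈ Z then 1 else 0) - (if C.f i ∈ Z then 1 else 0) := by
  have hA : C.edge i ∈ A := C.mem i
  have hmem : C.edge i ∈ dicutOf A Z ↔ ((C.edge i).2 ∈ Z ∧ (C.edge i).1 ∉ Z) :=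
    ⟨fun h => h.2, fun h => ⟨hA, h⟩⟩
  cases hd : C.dir i
  · have he : C.edge i = (C.f (i + 1), C.f i) := by simp [Circuit.edge, hd]
    rw [he] at hmem hA
    by_cases h1 : C.f i ∈ Z <;> by_cases h2 : C.f (i + 1) ∈ Z
    · rw [chi_of_not_mem (he ▸ fun h => (hmem.mp h).2 h2), if_pos h2, if_pos h1]; norm_num
    · rw [chi_of_mem (he ▸ hmem.mpr ⟨h1, h2⟩), hd, if_neg h2, if_pos h1]; norm_num
    · exact absurd (hZ _ hA h2) h1
    · rw [chi_of_not_mem (he ▸ fun h => h1 (hmem.mp h).1), if_neg h2, if_neg h1]; norm_num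
  · have he : C.edge i = (C.f i, C.f (i + 1)) := by simp [Circuit.edge, hd]
    rw [he] at hmem hA
    by_cases h1 : C.f i ∈ Z <;> by_cases h2 : C.f (i + 1) ∈ Z
    · rw [chi_of_not_mem (he ▸ fun h => (hmem.mp h).2 h1), if_pos h2, if_pos h1]; norm_num
    · exact absurd (hZ _ hA h1) h2
    · rw [chi_of_mem (he ▸ hmem.mpr ⟨h2, h1⟩), hd, if_pos h2, if_neg h1]; norm_num
    · rw [chi_of_not_mem (he ▸ fun h => h2 (hmem.mp h).1), if_neg h2, if_neg h1]; norm_num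
lemma fwd_eq_bwd_count {A : Set (V × V)} (C : Circuit A) {F : Set (V × V)}
    (hF : IsDisjointDicutUnion A F) : C.fwdCount F = C.bwdCount F := by
  classical
  obtain ⟨𝓑, h𝓑, hdisj, hFU⟩ := hF
  haveI : NeZero C.n := ⟨by have := C.hn; omega⟩
  have hpick : ∀ i : ZMod C.n, C.edge i ∈ F → ∃ B, B ∈ 𝓑 ∧ C.edge i ∈ B := by
    intro i hi; rw [hFU] at hi; exact Set.mem_sUnion.mp hi
  choose! t ht1 ht2 using hpick
  set 𝓕 : Finset (Set (V × V)) := (Finset.univ.filter (fun i => C.edge i ∈ F)).image t with h𝓕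
  have h𝓕mem : ∀ B ∈ 𝓕, B ∈ 𝓑 := by
    intro B hB
    simp only [h𝓕, Finset.mem_image, Finset.mem_filter, Finset.mem_univ, true_and] at hB
    obtain ⟨i, hi, rfl⟩ := hB; exact ht1 i hi
  have hBsubF : ∀ B ∈ 𝓑, B ⊆ F := fun B hB => hFU ▸ Set.subset_sUnion_of_mem hB
  have key : ∀ i, chi C F i = ∑ B ∈ 𝓕, chi C B i := by
    intro i
    by_cases hi : C.edge i ∈ F
    · rw [Finset.sum_eq_single (t i)]
      · rw [chi_of_mem hi, chi_of_mem (ht2 i hi)]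
      · intro B hB hne
        have hdis := hdisj (h𝓕mem B hB) (ht1 i hi) hne
        exact chi_of_not_mem (fun hmem => (Set.disjoint_left.mp hdis hmem) (ht2 i hi))
      · intro hti
        exact absurd (Finset.mem_image_of_mem t
          (Finset.mem_filter.mpr ⟨Finset.mem_univ i, hi⟩)) hti
    · rw [Finset.sum_congr rfl
        (fun B hB => chi_of_not_mem (fun h => hi (hBsubF B (h𝓕mem B hB) h))),
        Finset.sum_const_zero, chi_of_not_mem hi]
  have hsum0 : ∑ i : ZMod C.n, chi C F i = 0 := by
    calc ∑ i : ZMod C.n, chi C F i = ∑ i : ZMod C.n, ∑ B ∈ 𝓕, chi C B i :=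
          Finset.sum_congr rfl (fun i _ => key i)
    _ = ∑ B ∈ 𝓕, ∑ i : ZMod C.n, chi C B i := Finset.sum_comm
    _ = 0 := by
        apply Finset.sum_eq_zero; intro B hB
        obtain ⟨Z, hZ, rfl⟩ := h𝓑 B (h𝓕mem B hB)
        calc ∑ i : ZMod C.n, chi C (dicutOf A Z) i
            = ∑ i : ZMod C.n,
              ((if C.f (i + 1) ∈ Z then (1:ℤ) else 0) - (if C.f i ∈ Z then 1 else 0)) :=
              Finset.sum_congr rfl fun i _ => chi_dicut C hZ i
        _ = 0 := zmod_telescope (fun j => if C.f j ∈ Z then (1:ℤ) else 0)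
  have hcast : (C.fwdCount F : ℤ) - (C.bwdCount F : ℤ) = ∑ i : ZMod C.n, chi C F i := by
    rw [Circuit.fwdCount, Circuit.bwdCount, ncard_setOf_cast, ncard_setOf_cast,
      ← Finset.sum_sub_distrib]
    refine Finset.sum_congr rfl fun i _ => ?_
    by_cases h1 : C.dir i <;> by_cases h2 : C.edge i ∈ F <;> simp [chi, h1, h2]
  rw [hsum0] at hcast
  exact_mod_cast sub_eq_zero.mp hcast
lemma forward_dir [Fintype V] {A : Set (V × V)} {S : Set V} {F : Set (V × V)}
    (hF : IsDisjointDicutUnion A F) (hsink : ∀ s ∈ S, IsSinkIn (rev A F) s)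
    (C : Circuit A) : (S ∩ C.verts).ncard ≤ C.eta := by
  classical
  haveI : NeZero C.n := ⟨by have := C.hn; omega⟩
  set d : ZMod C.n → Bool := fun i => if C.edge i ∈ F then !C.dir i else C.dir i with hd
  have hout : ∀ i : ZMod C.n, d i = true → (C.f i, C.f (i + 1)) ∈ rev A F := by
    intro i hdi
    by_cases hFi : C.edge i ∈ F
    · have hdir : C.dir i = false := by
        rw [hd] at hdi; simp only [if_pos hFi] at hdi; simpa using hdi
      have heq : C.edge i = (C.f (i + 1), C.f i) := by simp [Circuit.edge, hdir]
      refine Set.mem_union_right _ ⟨C.edge i, hFi, ?_⟩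
      rw [heq]; rfl
    · have hdir : C.dir i = true := by
        rw [hd] at hdi; simpa only [if_neg hFi] using hdi
      have hm := C.mem i
      rw [hdir] at hm; simp only [if_pos rfl] at hm
      have heq : C.edge i = (C.f i, C.f (i + 1)) := by simp [Circuit.edge, hdir]
      exact Set.mem_union_left _ ⟨hm, heq ▸ hFi⟩
  have hout' : ∀ i : ZMod C.n, d i = false → (C.f (i + 1), C.f i) ∈ rev A F := by
    intro i hdi
    by_cases hFi : C.edge i ∈ F
    · have hdir : C.dir i = true := by
        rw [hd] at hdi; simp only [if_pos hFi] at hdi; simpa using hdi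
      have heq : C.edge i = (C.f i, C.f (i + 1)) := by simp [Circuit.edge, hdir]
      refine Set.mem_union_right _ ⟨C.edge i, hFi, ?_⟩
      rw [heq]; rfl
    · have hdir : C.dir i = false := by
        rw [hd] at hdi; simpa only [if_neg hFi] using hdi
      have hm := C.mem i
      rw [hdir] at hm; simp only [Bool.false_eq_true, if_false] at hm
      have heq : C.edge i = (C.f (i + 1), C.f i) := by simp [Circuit.edge, hdir]
      exact Set.mem_union_left _ ⟨hm, heq ▸ hFi⟩
  have hloc1 : ∀ i : ZMod C.n, C.f i ∈ S → d i = false := by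
    intro i hi
    rcases Bool.eq_false_or_eq_true (d i) with h | h
    · exact absurd (hout i h) (hsink _ hi _)
    · exact h
  have hloc2 : ∀ i : ZMod C.n, C.f i ∈ S → d (i - 1) = true := by
    intro i hi
    rcases Bool.eq_false_or_eq_true (d (i - 1)) with h | h
    · exact h
    · have := hout' (i - 1) h
      rw [sub_add_cancel] at this
      exact absurd this (hsink _ hi _)
  have himg : S ∩ C.verts = C.f '' {i | C.f i ∈ S} := by
    ext v
    constructor
    · rintro ⟨hvS, i, rfl⟩
      exact ⟨i, hvS, rfl⟩
    · rintro ⟨i, hiS, rfl⟩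
      exact ⟨hiS, ⟨i, rfl⟩⟩
  have h2 : {i : ZMod C.n | C.f i ∈ S}.ncard
      ≤ {i : ZMod C.n | d (i - 1) = true ∧ d i = false}.ncard :=
    Set.ncard_le_ncard (fun i hi => ⟨hloc2 i hi, hloc1 i hi⟩) (Set.toFinite _)
  have h3 : {i : ZMod C.n | d (i - 1) = true ∧ d i = false}.ncard
      ≤ {i : ZMod C.n | d i = false}.ncard :=
    Set.ncard_le_ncard (fun i hi => hi.2) (Set.toFinite _)
  have h4 : {i : ZMod C.n | d (i - 1) = true ∧ d i = false}.ncard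
      ≤ {i : ZMod C.n | d (i - 1) = true}.ncard :=
    Set.ncard_le_ncard (fun i hi => hi.1) (Set.toFinite _)
  have h5 : {i : ZMod C.n | d (i - 1) = true}.ncard = {i : ZMod C.n | d i = true}.ncard := by
    have himg2 : {i : ZMod C.n | d (i - 1) = true}
        = (fun j => j + 1) '' {i : ZMod C.n | d i = true} := by
      ext i
      simp only [Set.mem_image, Set.mem_setOf_eq]
      constructor
      · intro h; exact ⟨i - 1, h, by ring⟩
      · rintro ⟨j, hj, rfl⟩; simpa using hj
    rw [himg2, Set.ncard_image_of_injective _ (add_left_injective 1)]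
  have hcnt := fwd_eq_bwd_count C hF
  have hcnt' : ({i : ZMod C.n | C.dir i = true ∧ C.edge i ∈ F}.ncard : ℤ)
      = ({i : ZMod C.n | C.dir i = false ∧ C.edge i ∈ F}.ncard : ℤ) := by
    exact_mod_cast hcnt
  have hfwd : {i : ZMod C.n | d i = true}.ncard = C.fwd := by
    have e : ∀ i ∈ (Finset.univ : Finset (ZMod C.n)),
        (if d i = true then (1:ℤ) else 0) - (if C.dir i = true then 1 else 0)
        = (if C.dir i = false ∧ C.edge i ∈ F then (1:ℤ) else 0)
          - (if C.dir i = true ∧ C.edge i ∈ F then 1 else 0) := by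
      intro i _
      by_cases h1 : C.edge i ∈ F <;> cases hb : C.dir i <;> simp [hd, h1, hb]
    have hsum := Finset.sum_congr rfl e
    rw [Finset.sum_sub_distrib, Finset.sum_sub_distrib,
      ← ncard_setOf_cast (fun i : ZMod C.n => d i = true),
      ← ncard_setOf_cast (fun i : ZMod C.n => C.dir i = true),
      ← ncard_setOf_cast (fun i : ZMod C.n => C.dir i = false ∧ C.edge i ∈ F),
      ← ncard_setOf_cast (fun i : ZMod C.n => C.dir i = true ∧ C.edge i ∈ F)] at hsum
    have : ({i : ZMod C.n | d i = true}.ncard : ℤ)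
        = ({i : ZMod C.n | C.dir i = true}.ncard : ℤ) := by linarith
    rw [Circuit.fwd]
    exact_mod_cast this
  have hbwd : {i : ZMod C.n | d i = false}.ncard = C.bwd := by
    have e : ∀ i ∈ (Finset.univ : Finset (ZMod C.n)),
        (if d i = false then (1:ℤ) else 0) - (if C.dir i = false then 1 else 0)
        = (if C.dir i = true ∧ C.edge i ∈ F then (1:ℤ) else 0)
          - (if C.dir i = false ∧ C.edge i ∈ F then 1 else 0) := by
      intro i _
      by_cases h1 : C.edge i ∈ F <;> cases hb : C.dir i <;> simp [hd, h1, hb]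
    have hsum := Finset.sum_congr rfl e
    rw [Finset.sum_sub_distrib, Finset.sum_sub_distrib,
      ← ncard_setOf_cast (fun i : ZMod C.n => d i = false),
      ← ncard_setOf_cast (fun i : ZMod C.n => C.dir i = false),
      ← ncard_setOf_cast (fun i : ZMod C.n => C.dir i = true ∧ C.edge i ∈ F),
      ← ncard_setOf_cast (fun i : ZMod C.n => C.dir i = false ∧ C.edge i ∈ F)] at hsum
    have : ({i : ZMod C.n | d i = false}.ncard : ℤ)
        = ({i : ZMod C.n | C.dir i = false}.ncard : ℤ) := by linarith
    rw [Circuit.bwd]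
    exact_mod_cast this
  rw [himg, Set.ncard_image_of_injective _ C.inj, Circuit.eta]
  exact le_min (h2.trans (h4.trans (le_of_eq (h5.trans hfwd))))
    (h2.trans (h3.trans (le_of_eq hbwd)))
/-- An arc of the underlying undirected graph of `A`. -/
def ArcOf (A : Set (V × V)) (x y : V) : Prop := (x, y) ∈ A ∨ (y, x) ∈ A

open Classical in
/-- The weight of the constraint arc from `x` to `y`. -/
noncomputable def wgt (A : Set (V × V)) (S : Set V) (x y : V) : ℤ :=
  (if (y, x) ∈ A then 0 else 1) - (if y ∈ S then 1 else 0)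

lemma wgt_le_one (A : Set (V × V)) (S : Set V) (x y : V) : wgt A S x y ≤ 1 := by
  rw [wgt]; split_ifs <;> norm_num

lemma neg_one_le_wgt (A : Set (V × V)) (S : Set V) (x y : V) : -1 ≤ wgt A S x y := by
  rw [wgt]; split_ifs <;> norm_num

/-- `p` is a walk of length `m` in the underlying undirected graph. -/
def IsWalkOf (A : Set (V × V)) (p : ℕ → V) (m : ℕ) : Prop :=
  ∀ i < m, ArcOf A (p i) (p (i + 1))

/-- The total weight of a walk. -/
noncomputable def wWeight (A : Set (V × V)) (S : Set V) (p : ℕ → V) (m : ℕ) : ℤ :=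
  ∑ i ∈ Finset.range m, wgt A S (p i) (p (i + 1))

lemma wWeight_ge (A : Set (V × V)) (S : Set V) (p : ℕ → V) (m : ℕ) :
    -(m : ℤ) ≤ wWeight A S p m := by
  calc -(m : ℤ) = ∑ _i ∈ Finset.range m, (-1 : ℤ) := by simp
  _ ≤ wWeight A S p m := Finset.sum_le_sum fun i _ => neg_one_le_wgt A S _ _

lemma walk_split {A : Set (V × V)} (S : Set V) (p : ℕ → V) {m i j : ℕ} (hij : i < j)
    (hjm : j ≤ m) (hpij : p i = p j) (hw : IsWalkOf A p m) :
    IsWalkOf A (fun t => p (i + t)) (j - i) ∧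
    IsWalkOf A (fun t => if t < i then p t else p (t + (j - i))) (m - (j - i)) ∧
    wWeight A S p m
      = wWeight A S (fun t => if t < i then p t else p (t + (j - i))) (m - (j - i))
        + wWeight A S (fun t => p (i + t)) (j - i) := by
  set k := j - i with hk
  set r : ℕ → V := fun t => if t < i then p t else p (t + k) with hr
  have hr1 : ∀ t, t ≤ i → r t = p t := by
    intro t ht
    rcases lt_or_eq_of_le ht with h | h
    · simp [hr, h]
    · subst h
      simp only [hr, lt_irrefl, if_neg (lt_irrefl t)]
      rw [show t + k = j by omega, ← hpij]
  have hr2 : ∀ t, i ≤ t → r t = p (t + k) := by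
    intro t ht
    simp [hr, not_lt.mpr ht]
  have hq : IsWalkOf A (fun t => p (i + t)) k := by
    intro t ht
    show ArcOf A (p (i + t)) (p (i + (t + 1)))
    rw [show i + (t + 1) = (i + t) + 1 by ring]
    exact hw (i + t) (by omega)
  have hrwalk : IsWalkOf A r (m - k) := by
    intro t ht
    by_cases htc : t + 1 ≤ i
    · show ArcOf A (r t) (r (t + 1))
      rw [hr1 t (by omega), hr1 (t + 1) htc]
      exact hw t (by omega)
    · show ArcOf A (r t) (r (t + 1))
      rw [hr2 t (by omega), hr2 (t + 1) (by omega),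
        show t + 1 + k = (t + k) + 1 by ring]
      exact hw (t + k) (by omega)
  refine ⟨hq, hrwalk, ?_⟩
  have e1 : wWeight A S r (m - k)
      = (∑ t ∈ Finset.range i, wgt A S (p t) (p (t + 1)))
        + ∑ t ∈ Finset.range (m - j), wgt A S (p (j + t)) (p (j + t + 1)) := by
    rw [wWeight, show m - k = i + (m - j) by omega, Finset.sum_range_add]
    congr 1
    · refine Finset.sum_congr rfl fun t htt => ?_
      rw [Finset.mem_range] at htt
      rw [hr1 t (by omega), hr1 (t + 1) (by omega)]
    · refine Finset.sum_congr rfl fun t _ => ?_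
      rw [hr2 (i + t) (by omega), hr2 (i + t + 1) (by omega),
        show i + t + k = j + t by omega, show i + t + 1 + k = j + t + 1 by omega]
  have e2 : wWeight A S (fun t => p (i + t)) k
      = ∑ t ∈ Finset.range k, wgt A S (p (i + t)) (p (i + t + 1)) := by
    rw [wWeight]
    refine Finset.sum_congr rfl fun t _ => ?_
    show wgt A S (p (i + t)) (p (i + (t + 1))) = _
    rw [show i + (t + 1) = i + t + 1 by ring]
  have etot : wWeight A S p m
      = (∑ t ∈ Finset.range i, wgt A S (p t) (p (t + 1)))
        + ((∑ t ∈ Finset.range k, wgt A S (p (i + t)) (p (i + t + 1)))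
          + ∑ t ∈ Finset.range (m - j), wgt A S (p (j + t)) (p (j + t + 1))) := by
    rw [wWeight]
    conv_lhs => rw [show m = i + (k + (m - j)) by omega]
    rw [Finset.sum_range_add, Finset.sum_range_add]
    congr 1
    congr 1
    refine Finset.sum_congr rfl fun t _ => ?_
    rw [show i + (k + t) = j + t by omega]
  rw [e1, e2, etot]
  ring
lemma natCast_val_id {m : ℕ} [NeZero m] (i : ZMod m) : ((i.val : ℕ) : ZMod m) = i :=
  ZMod.val_injective m (by rw [ZMod.val_cast_of_lt (ZMod.val_lt i)])

lemma sum_range_zmod {m : ℕ} [NeZero m] (g : ZMod m → ℤ) :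
    ∑ t ∈ Finset.range m, g ((t : ℕ) : ZMod m) = ∑ i : ZMod m, g i := by
  refine Finset.sum_bij' (i := fun t _ => ((t : ℕ) : ZMod m)) (j := fun i _ => i.val)
    (hi := fun t _ => Finset.mem_univ _)
    (hj := fun i _ => Finset.mem_range.mpr (ZMod.val_lt i))
    (left_neg := fun t ht => ZMod.val_cast_of_lt (Finset.mem_range.mp ht))
    (right_neg := fun i _ => natCast_val_id i)
    (h := fun t _ => rfl)

lemma closed_walk_nonneg [Fintype V] {A : Set (V × V)} {S : Set V} (hS : Stable A S)
    (h : ∀ C : Circuit A, (S ∩ C.verts).ncard ≤ C.eta) (m : ℕ) :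
    0 < m → ∀ p : ℕ → V, IsWalkOf A p m → p m = p 0 → 0 ≤ wWeight A S p m := by
  classical
  induction m using Nat.strong_induction_on with
  | _ m ih =>
  intro hm p hw hcl
  by_cases hrep : ∃ i j, i < j ∧ j ≤ m ∧ j - i < m ∧ p i = p j
  · obtain ⟨i, j, hij, hjm, hlt, hpij⟩ := hrep
    obtain ⟨hq, hr, hsum⟩ := walk_split S p hij hjm hpij hw
    have hqcl : (fun t => p (i + t)) (j - i) = (fun t => p (i + t)) 0 := by
      show p (i + (j - i)) = p (i + 0)
      rw [show i + (j - i) = j by omega, show i + 0 = i by ring]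
      exact hpij.symm
    have hrcl : (fun t => if t < i then p t else p (t + (j - i))) (m - (j - i))
        = (fun t => if t < i then p t else p (t + (j - i))) 0 := by
      show (if m - (j - i) < i then p (m - (j - i)) else p (m - (j - i) + (j - i)))
        = (if 0 < i then p 0 else p (0 + (j - i)))
      rw [if_neg (by omega : ¬ m - (j - i) < i), show m - (j - i) + (j - i) = m by omega]
      by_cases h0 : 0 < i
      · rw [if_pos h0]; exact hcl
      · rw [if_neg h0, show (0 : ℕ) + (j - i) = j by omega, ← hpij,
          show i = 0 by omega]
        exact hcl
    have hge1 := ih (j - i) (by omega) (by omega) _ hq hqcl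
    have hge2 := ih (m - (j - i)) (by omega) (by omega) _ hr hrcl
    rw [hsum]; linarith
  · push_neg at hrep
    have hinj : ∀ a b, a < m → b < m → p a = p b → a = b := by
      intro a b ha hb hab
      by_contra hne
      rcases Nat.lt_or_ge a b with hh | hh
      · exact hrep a b hh (by omega) (by omega) hab
      · exact hrep b a (by omega) (by omega) (by omega) hab.symm
    rcases Nat.lt_or_ge m 2 with hm2 | hm2
    · have hm1 : m = 1 := by omega
      subst hm1
      have harc := hw 0 (by norm_num)
      rw [hcl] at harc
      have hself : (p 0, p 0) ∈ A := by rcases harc with hh | hh <;> exact hh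
      have hnS : p 0 ∉ S := fun hs => hS _ hs _ hs hself
      rw [wWeight, Finset.sum_range_one, hcl, wgt, if_pos hself, if_neg hnS]
      norm_num
    · by_cases hdeg : m = 2 ∧ ¬ ((p 0, p 1) ∈ A ∧ (p 1, p 0) ∈ A)
      · obtain ⟨hm2', hnb⟩ := hdeg
        subst hm2'
        have h01 := hw 0 (by norm_num)
        rw [wWeight, Finset.sum_range_succ, Finset.sum_range_one, hcl]
        rcases h01 with ha | ha
        · have hno : (p 1, p 0) ∉ A := fun hb => hnb ⟨ha, hb⟩
          rw [wgt, wgt, if_neg hno, if_pos ha]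
          by_cases h0S : p 0 ∈ S <;> by_cases h1S : p 1 ∈ S
          · exact absurd ha (hS _ h0S _ h1S)
          · simp [h0S, h1S]
          · simp [h0S, h1S]
          · simp [h0S, h1S]
        · have hno : (p 0, p 1) ∉ A := fun hb => hnb ⟨hb, ha⟩
          rw [wgt, wgt, if_pos ha, if_neg hno]
          by_cases h0S : p 0 ∈ S <;> by_cases h1S : p 1 ∈ S
          · exact absurd ha (hS _ h1S _ h0S)
          · simp [h0S, h1S]
          · simp [h0S, h1S]
          · simp [h0S, h1S]
      · -- build a circuit
        have hboth : m = 2 → ((p 0, p 1) ∈ A ∧ (p 1, p 0) ∈ A) := by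
          intro h2
          by_contra hc
          exact hdeg ⟨h2, hc⟩
        haveI : NeZero m := ⟨by omega⟩
        set f : ZMod m → V := fun i => p i.val with hf
        have hfsucc : ∀ i : ZMod m, f (i + 1) = p (i.val + 1) := by
          intro i
          have hv : i.val < m := ZMod.val_lt i
          show p ((i + 1).val) = p (i.val + 1)
          have h1v : (1 : ZMod m).val = 1 := by
            haveI : Fact (1 < m) := ⟨by omega⟩
            exact ZMod.val_one m
          rw [ZMod.val_add, h1v]
          by_cases hlt : i.val + 1 < m
          · rw [Nat.mod_eq_of_lt hlt]
          · rw [show i.val + 1 = m by omega, Nat.mod_self]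
            exact hcl.symm
        have hfval : ∀ t, t < m → f ((t : ℕ) : ZMod m) = p t := by
          intro t ht
          show p (((t : ℕ) : ZMod m)).val = p t
          rw [ZMod.val_cast_of_lt ht]
        set dir : ZMod m → Bool := fun i => if (f (i + 1), f i) ∈ A then false else true
          with hdir
        have harc : ∀ i : ZMod m, ArcOf A (f i) (f (i + 1)) := by
          intro i
          rw [hfsucc i]
          exact hw i.val (ZMod.val_lt i)
        have hmem : ∀ i : ZMod m,
            (if dir i then (f i, f (i + 1)) else (f (i + 1), f i)) ∈ A := by
          intro i
          by_cases hb : (f (i + 1), f i) ∈ A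
          · rw [hdir]
            simp only [if_pos hb, Bool.false_eq_true, if_false]
            exact hb
          · rcases harc i with hh | hh
            · rw [hdir]
              simp only [if_neg hb, if_true]
              exact hh
            · exact absurd hh hb
        have hinj' : Function.Injective f := by
          intro a b hab
          exact ZMod.val_injective m
            (hinj a.val b.val (ZMod.val_lt a) (ZMod.val_lt b) hab)
        have hdirfalse : m = 2 → ∀ c : ZMod m, (f (c + 1), f c) ∈ A := by
          intro h2 c
          obtain ⟨hb1, hb2⟩ := hboth h2
          have hcv : c.val < m := ZMod.val_lt c
          rw [hfsucc c]
          show (p (c.val + 1), p c.val) ∈ A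
          have : c.val = 0 ∨ c.val = 1 := by omega
          rcases this with hh | hh <;> rw [hh]
          · exact hb2
          · rw [show (1 : ℕ) + 1 = 2 from rfl, show (2 : ℕ) = m by omega, hcl]
            exact hb1
        have hedge : Function.Injective
            (fun i : ZMod m => if dir i then (f i, f (i + 1)) else (f (i + 1), f i)) := by
          intro a b hab
          by_contra hne
          have hab' : (if dir a then (f a, f (a + 1)) else (f (a + 1), f a))
              = (if dir b then (f b, f (b + 1)) else (f (b + 1), f b)) := hab
          cases hda : dir a <;> cases hdb : dir b <;>
            rw [hda, hdb] at hab' <;>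
            simp only [if_true, Bool.false_eq_true, if_false, Prod.mk.injEq] at hab'
          -- (F,F)
          · exact hne (hinj' hab'.2)
          -- (F,T) : (f (a+1), f a) = (f b, f (b+1))
          · have e1 : a + 1 = b := hinj' hab'.1
            have e2 : a = b + 1 := hinj' hab'.2
            have h20 : (2 : ZMod m) = 0 := by
              have : a = a + 2 := by
                conv_lhs => rw [e2]
                rw [← e1]; ring
              have := left_eq_add.mp this
              exact this
            have hm2' : m = 2 := by
              have hdvd : m ∣ 2 := by
                have : ((2 : ℕ) : ZMod m) = 0 := by exact_mod_cast h20
                exact (ZMod.natCast_eq_zero_iff 2 m).mp this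
              have := Nat.le_of_dvd (by norm_num) hdvd
              omega
            have := hdirfalse hm2' b
            rw [hdir] at hdb
            simp only [if_pos this] at hdb
            exact absurd hdb (by simp)
          -- (T,F) : (f a, f (a+1)) = (f (b+1), f b)
          · have e1 : a = b + 1 := hinj' hab'.1
            have e2 : a + 1 = b := hinj' hab'.2
            have h20 : (2 : ZMod m) = 0 := by
              have : a = a + 2 := by
                conv_lhs => rw [e1]
                rw [← e2]; ring
              exact left_eq_add.mp this
            have hm2' : m = 2 := by
              have hdvd : m ∣ 2 := by
                have : ((2 : ℕ) : ZMod m) = 0 := by exact_mod_cast h20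
                exact (ZMod.natCast_eq_zero_iff 2 m).mp this
              have := Nat.le_of_dvd (by norm_num) hdvd
              omega
            have := hdirfalse hm2' a
            rw [hdir] at hda
            simp only [if_pos this] at hda
            exact absurd hda (by simp)
          -- (T,T)
          · exact hne (hinj' hab'.1)
        set Cc : Circuit A := ⟨m, hm2, f, hinj', dir, hmem, hedge⟩ with hCc
        have hterm : ∀ t, t < m → wgt A S (p t) (p (t + 1))
            = (if dir ((t : ℕ) : ZMod m) then (1:ℤ) else 0)
              - (if f (((t : ℕ) : ZMod m) + 1) ∈ S then 1 else 0) := by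
          intro t ht
          have hft : f ((t : ℕ) : ZMod m) = p t := hfval t ht
          have hft1 : f (((t : ℕ) : ZMod m) + 1) = p (t + 1) := by
            rw [hfsucc, ZMod.val_cast_of_lt ht]
          rw [wgt, hft1]
          congr 1
          rw [hdir]
          simp only [hft, hft1]
          by_cases hb : (p (t + 1), p t) ∈ A
          · rw [if_pos hb, if_pos hb]
            simp
          · rw [if_neg hb, if_neg hb]
            simp
        have hwsum : wWeight A S p m
            = (∑ i : ZMod m, if dir i then (1:ℤ) else 0)
              - ∑ i : ZMod m, (if f (i + 1) ∈ S then (1:ℤ) else 0) := by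
          rw [wWeight, ← Finset.sum_sub_distrib, ← sum_range_zmod
            (fun i : ZMod m => (if dir i then (1:ℤ) else 0) - (if f (i + 1) ∈ S then 1 else 0))]
          refine Finset.sum_congr rfl fun t ht => ?_
          exact hterm t (Finset.mem_range.mp ht)
        have hfwd : (∑ i : ZMod m, if dir i then (1:ℤ) else 0) = (Cc.fwd : ℤ) := by
          rw [Circuit.fwd, ncard_setOf_cast]
        have hvert : (∑ i : ZMod m, if f (i + 1) ∈ S then (1:ℤ) else 0)
            = ((S ∩ Cc.verts).ncard : ℤ) := by
          rw [← ncard_setOf_cast (fun i : ZMod m => f (i + 1) ∈ S)]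
          congr 1
          have himg : {i : ZMod m | f (i + 1) ∈ S} = (fun j => j - 1) '' {j : ZMod m | f j ∈ S} := by
            ext i
            simp only [Set.mem_image, Set.mem_setOf_eq]
            constructor
            · intro hh; exact ⟨i + 1, hh, by ring⟩
            · rintro ⟨j, hj, rfl⟩
              rw [sub_add_cancel]
              exact hj
          rw [himg, Set.ncard_image_of_injective _ (sub_left_injective (b := (1 : ZMod m)))]
          have himg2 : S ∩ Cc.verts = f '' {j : ZMod m | f j ∈ S} := by
            ext v
            constructor
            · rintro ⟨hvS, i, rfl⟩
              exact ⟨i, hvS, rfl⟩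
            · rintro ⟨i, hiS, rfl⟩
              exact ⟨hiS, ⟨i, rfl⟩⟩
          rw [himg2, Set.ncard_image_of_injective _ hinj']
        rw [hwsum, hfwd, hvert]
        have hle := h Cc
        have : (S ∩ Cc.verts).ncard ≤ Cc.fwd := hle.trans (min_le_left _ _)
        have : ((S ∩ Cc.verts).ncard : ℤ) ≤ (Cc.fwd : ℤ) := Nat.cast_le.mpr this
        linarith

section BF
open Classical in
/-- Bellman-Ford iteration for the constraint graph. -/
noncomputable def dBF (A : Set (V × V)) (S : Set V) [Fintype V] [Nonempty V] : ℕ → V → ℤ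
  | 0 => fun _ => 0
  | (k+1) => fun v =>
      min (dBF A S k v)
        (Finset.univ.inf' Finset.univ_nonempty
          (fun u => if ArcOf A u v then dBF A S k u + wgt A S u v else dBF A S k v))

variable [Fintype V] [Nonempty V] {A : Set (V × V)} {S : Set V}

lemma dBF_succ_le (k : ℕ) (v : V) : dBF A S (k + 1) v ≤ dBF A S k v :=
  min_le_left _ _

open Classical in
lemma dBF_arc {u v : V} (harc : ArcOf A u v) (k : ℕ) :
    dBF A S (k + 1) v ≤ dBF A S k u + wgt A S u v := by
  refine (min_le_right _ _).trans ((Finset.inf'_le _ (Finset.mem_univ u)).trans ?_)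
  rw [if_pos harc]

lemma dBF_exists_walk (k : ℕ) (v : V) :
    ∃ m, m ≤ k ∧ ∃ p : ℕ → V, IsWalkOf A p m ∧ p m = v ∧ dBF A S k v = wWeight A S p m := by
  classical
  induction k generalizing v with
  | zero =>
    exact ⟨0, le_refl 0, fun _ => v, fun i hi => absurd hi (by omega), rfl,
      by simp [dBF, wWeight]⟩
  | succ k ihk =>
    by_cases hcase : dBF A S (k + 1) v = dBF A S k v
    · obtain ⟨m, hm, p, hwp, hpv, hval⟩ := ihk v
      exact ⟨m, by omega, p, hwp, hpv, by rw [hcase, hval]⟩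
    · have hmin : dBF A S (k + 1) v = Finset.univ.inf' Finset.univ_nonempty
          (fun u => if ArcOf A u v then dBF A S k u + wgt A S u v else dBF A S k v) := by
        rcases min_choice (dBF A S k v) (Finset.univ.inf' Finset.univ_nonempty
          (fun u => if ArcOf A u v then dBF A S k u + wgt A S u v else dBF A S k v)) with
          hh | hh
        · exact absurd hh hcase
        · exact hh
      obtain ⟨u, -, hu⟩ := Finset.exists_mem_eq_inf' Finset.univ_nonempty
        (fun u => if ArcOf A u v then dBF A S k u + wgt A S u v else dBF A S k v)
      by_cases harc : ArcOf A u v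
      · rw [if_pos harc] at hu
        obtain ⟨m, hm, p, hwp, hpu, hval⟩ := ihk u
        refine ⟨m + 1, by omega, fun t => if t ≤ m then p t else v, ?_, ?_, ?_⟩
        · intro t ht
          by_cases htm : t < m
          · show ArcOf A (if t ≤ m then p t else v) (if t + 1 ≤ m then p (t + 1) else v)
            rw [if_pos (by omega : t ≤ m), if_pos (by omega : t + 1 ≤ m)]
            exact hwp t htm
          · have htm' : t = m := by omega
            subst htm'
            show ArcOf A (if t ≤ t then p t else v) (if t + 1 ≤ t then p (t + 1) else v)
            rw [if_pos (le_refl t), if_neg (by omega), hpu]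
            exact harc
        · show (if m + 1 ≤ m then p (m + 1) else v) = v
          rw [if_neg (by omega)]
        · rw [hmin, hu, hval, wWeight, wWeight, Finset.sum_range_succ]
          congr 1
          · refine Finset.sum_congr rfl fun t ht => ?_
            rw [Finset.mem_range] at ht
            show wgt A S (p t) (p (t + 1))
              = wgt A S (if t ≤ m then p t else v) (if t + 1 ≤ m then p (t + 1) else v)
            rw [if_pos (by omega : t ≤ m), if_pos (by omega : t + 1 ≤ m)]
          · show wgt A S u v
              = wgt A S (if m ≤ m then p m else v) (if m + 1 ≤ m then p (m + 1) else v)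
            rw [if_pos (le_refl m), if_neg (by omega), hpu]
      · rw [if_neg harc] at hu
        rw [hmin, hu] at hcase
        exact absurd rfl hcase

lemma walk_ge (hS : Stable A S) (h : ∀ C : Circuit A, (S ∩ C.verts).ncard ≤ C.eta)
    (m : ℕ) (p : ℕ → V) (hwp : IsWalkOf A p m) :
    -(Fintype.card V : ℤ) ≤ wWeight A S p m := by
  classical
  induction m using Nat.strong_induction_on generalizing p with
  | _ m ih =>
  set N := Fintype.card V with hN
  by_cases hm : m ≤ N
  · calc -(N : ℤ) ≤ -(m : ℤ) := by
          simp only [neg_le_neg_iff]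
          exact_mod_cast hm
    _ ≤ wWeight A S p m := wWeight_ge A S p m
  · have hpig : ∃ a ∈ Finset.range (N + 1), ∃ b ∈ Finset.range (N + 1), a ≠ b ∧ p a = p b := by
      refine Finset.exists_ne_map_eq_of_card_lt_of_maps_to ?_ (fun a _ => Finset.mem_univ (p a))
      simp [hN]
    obtain ⟨a, ha, b, hb, hab, hpab⟩ := hpig
    rw [Finset.mem_range] at ha hb
    -- order them
    have key : ∀ i j, i < j → j ≤ N → p i = p j → -(N:ℤ) ≤ wWeight A S p m := by
      intro i j hij hjN hpij
      obtain ⟨hq, hr, hsum⟩ := walk_split S p hij (by omega) hpij hwp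
      have hqcl : (fun t => p (i + t)) (j - i) = (fun t => p (i + t)) 0 := by
        show p (i + (j - i)) = p (i + 0)
        rw [show i + (j - i) = j by omega, show i + 0 = i by ring]
        exact hpij.symm
      have hq0 := closed_walk_nonneg hS h (j - i) (by omega) _ hq hqcl
      have hr0 := ih (m - (j - i)) (by omega) _ hr
      rw [hsum]
      linarith
    rcases Nat.lt_or_ge a b with hh | hh
    · exact key a b hh (by omega) hpab
    · exact key b a (by omega) (by omega) hpab.symm

lemma exists_potential (hS : Stable A S)
    (h : ∀ C : Circuit A, (S ∩ C.verts).ncard ≤ C.eta) :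
    ∃ π : V → ℤ, ∀ u v, ArcOf A u v → π v ≤ π u + wgt A S u v := by
  classical
  set N := Fintype.card V with hN
  have hlb : ∀ k v, -(N : ℤ) ≤ dBF A S k v := by
    intro k v
    obtain ⟨m, -, p, hwp, -, hval⟩ := dBF_exists_walk (A := A) (S := S) k v
    rw [hval]
    exact walk_ge hS h m p hwp
  set e : ℕ → ℤ := fun k => ∑ v : V, dBF A S k v with he
  have claim : ∃ k, ∀ v, dBF A S (k + 1) v = dBF A S k v := by
    by_contra hc
    push_neg at hc
    have hdec : ∀ k, e (k + 1) ≤ e k - 1 := by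
      intro k
      obtain ⟨v, hv⟩ := hc k
      have hlt : e (k + 1) < e k := by
        refine Finset.sum_lt_sum (fun w _ => dBF_succ_le k w) ⟨v, Finset.mem_univ v,
          lt_of_le_of_ne (dBF_succ_le k v) hv⟩
      omega
    have hdown : ∀ k, e k ≤ -(k : ℤ) := by
      intro k
      induction k with
      | zero => simp [he, dBF]
      | succ k ihk =>
        have := hdec k
        push_cast
        omega
    have hup : ∀ k, -((N : ℤ) * N) ≤ e k := by
      intro k
      have hcst : ∑ _v : V, -(N:ℤ) = -((N:ℤ) * N) := by
        rw [Finset.sum_const, Finset.card_univ, ← hN, nsmul_eq_mul]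
        ring
      rw [← hcst]
      exact Finset.sum_le_sum fun v _ => hlb k v
    have h1 := hdown (N * N + 1)
    have h2 := hup (N * N + 1)
    push_cast at h1
    omega
  obtain ⟨K, hK⟩ := claim
  exact ⟨dBF A S K, fun u v harc => by rw [← hK v]; exact dBF_arc harc K⟩
end BF

lemma backward_dir [Fintype V] {A : Set (V × V)} {S : Set V} (hS : Stable A S)
    (h : ∀ C : Circuit A, (S ∩ C.verts).ncard ≤ C.eta) : SinkStable A S := by
  classical
  cases isEmpty_or_nonempty V with
  | inl hemp =>
    refine ⟨∅, ⟨∅, by simp, by simp [Set.Pairwise], by simp⟩, fun s hs => ?_⟩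
    exact (IsEmpty.false s).elim
  | inr hne =>
    obtain ⟨π, hπ⟩ := exists_potential hS h
    have hup : ∀ e ∈ A, π e.1 ≤ π e.2 ∧ π e.2 ≤ π e.1 + 1
        ∧ (e.1 ∈ S → π e.2 = π e.1 + 1) ∧ (e.2 ∈ S → π e.2 = π e.1) := by
      rintro ⟨u, v⟩ he
      have c1 : π u + (if u ∈ S then (1:ℤ) else 0) ≤ π v := by
        have := hπ v u (Or.inr he)
        rw [wgt, if_pos he] at this
        linarith
      have c2 : π v ≤ π u + 1 - (if v ∈ S then (1:ℤ) else 0) := by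
        have := hπ u v (Or.inl he)
        rw [wgt] at this
        by_cases hb : (v, u) ∈ A
        · rw [if_pos hb] at this
          split_ifs at this ⊢ <;> linarith
        · rw [if_neg hb] at this
          linarith
      refine ⟨?_, ?_, ?_, ?_⟩
      · split_ifs at c1 <;> linarith
      · split_ifs at c2 <;> linarith
      · intro huS
        rw [if_pos huS] at c1
        split_ifs at c2 <;> linarith
      · intro hvS
        rw [if_pos hvS] at c2
        split_ifs at c1 <;> linarith
    set F : Set (V × V) := {e ∈ A | π e.1 < π e.2} with hF
    set 𝓑 : Set (Set (V × V)) := {B | ∃ j : ℤ, B = dicutOf A {v | j ≤ π v}} with h𝓑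
    have hNL : ∀ j : ℤ, NoLeaving A {v | j ≤ π v} := by
      intro j e he hz
      exact le_trans hz ((hup e he).1)
    refine ⟨F, ⟨𝓑, ?_, ?_, ?_⟩, ?_⟩
    · rintro B ⟨j, rfl⟩
      exact ⟨{v | j ≤ π v}, hNL j, rfl⟩
    · rintro B ⟨j, rfl⟩ B' ⟨j', rfl⟩ hne'
      rw [Set.disjoint_left]
      intro e heB heB'
      apply hne'
      obtain ⟨heA, he2, he1⟩ := heB
      obtain ⟨-, he2', he1'⟩ := heB'
      have hbd := (hup e heA).2.1
      have hj2 : j ≤ π e.2 := he2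
      have hj1 : ¬ j ≤ π e.1 := he1
      have hj2' : j' ≤ π e.2 := he2'
      have hj1' : ¬ j' ≤ π e.1 := he1'
      have : j = j' := by omega
      rw [this]
    · ext e
      constructor
      · rintro ⟨heA, hlt⟩
        refine ⟨dicutOf A {v | π e.2 ≤ π v}, ⟨π e.2, rfl⟩, ⟨heA, ?_, ?_⟩⟩
        · show π e.2 ≤ π e.2
          exact le_refl _
        · show ¬ π e.2 ≤ π e.1
          exact not_le.mpr hlt
      · rintro ⟨B, ⟨j, rfl⟩, heA, he2, he1⟩
        have he2' : j ≤ π e.2 := he2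
        have he1' : ¬ j ≤ π e.1 := he1
        exact ⟨heA, by omega⟩
    · intro s hs u hu
      rcases hu with ⟨hA', hnF⟩ | ⟨e, heF, hswap⟩
      · have := (hup (s, u) hA').2.2.1 hs
        exact hnF ⟨hA', by simp only at this ⊢; omega⟩
      · have he : e = (u, s) := by
          have : (e.2, e.1) = (s, u) := hswap
          have h1 : e.2 = s := congrArg Prod.fst this
          have h2 : e.1 = u := congrArg Prod.snd this
          rw [← h1, ← h2]
        rw [he] at heF
        obtain ⟨heA, hlt⟩ := heF
        have := (hup (u, s) heA).2.2.2 hs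
        simp only at this hlt
        omega
end SinkStableAux


/-- a stable set `S` is sink-stable iff
`|S ∩ V(C)| ≤ η(C)` for every circuit `C`. -/
theorem stmt6 [Fintype V] (A : Set (V × V)) (S : Set V) (hS : Stable A S) :
    SinkStable A S ↔ ∀ C : Circuit A, (S ∩ C.verts).ncard ≤ C.eta := by
  constructor
  · rintro ⟨F, hF, hsink⟩ C
    exact forward_dir hF hsink C
  · intro h
    exact backward_dir hS h
end
end

section
/- If every circuit C of a digraph D satisfies |C| ≤ k·η(C) for an integer k ≥ 2, then the chromatic number of the underlying undirected graph of D is at most k (Minty's theorem). -/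
open scoped BigOperators

noncomputable section

variable {V : Type*}

/-! ### Auxiliary machinery for Minty's theorem -/

/-- Arcs of the digraph with loops removed. -/
def MEarc (A : Set (V × V)) : Set (V × V) := {e | e.1 ≠ e.2 ∧ e ∈ A}

/-- Arcs of the symmetric closure. -/
def MBarc (A : Set (V × V)) : Set (V × V) := MEarc A ∪ Prod.swap '' MEarc A

/-- Minty weights: `1` on forward arcs, `-(k-1)` on reversed arcs. -/
noncomputable def mwgt (A : Set (V × V)) (k : ℕ) (e : V × V) : ℤ :=
  open scoped Classical in if e ∈ MEarc A then 1 else -((k : ℤ) - 1)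

def MIsWalk (A : Set (V × V)) (q : ℕ → V) (m : ℕ) : Prop :=
  ∀ t < m, (q t, q (t + 1)) ∈ MBarc A

noncomputable def mwsum (A : Set (V × V)) (k : ℕ) (q : ℕ → V) (m : ℕ) : ℤ :=
  ∑ t ∈ Finset.range m, mwgt A k (q t, q (t + 1))

lemma mwgt_le_one (A : Set (V × V)) (k : ℕ) (e : V × V) : mwgt A k e ≤ 1 := by
  unfold mwgt; split
  · exact le_refl _
  · have : (0:ℤ) ≤ (k:ℤ) := Int.natCast_nonneg k
    linarith

lemma mwgt_ge (A : Set (V × V)) (k : ℕ) (e : V × V) (hk : 2 ≤ k) :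
    -((k : ℤ) - 1) ≤ mwgt A k e := by
  unfold mwgt; split
  · have : (2:ℤ) ≤ (k:ℤ) := by exact_mod_cast hk
    linarith
  · exact le_refl _

lemma MBarc_ne {A : Set (V × V)} {e : V × V} (he : e ∈ MBarc A) : e.1 ≠ e.2 := by
  rcases he with he | ⟨e', he', rfl⟩
  · exact he.1
  · exact Ne.symm he'.1

lemma mcut {A : Set (V × V)} (k : ℕ) {q : ℕ → V} {m i j : ℕ}
    (hw : MIsWalk A q m) (hij : i < j) (hjm : j ≤ m) (hq : q i = q j) :
    MIsWalk A (fun t => if t < i then q t else q (t + (j - i))) (m - (j - i)) ∧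
    (fun t => if t < i then q t else q (t + (j - i))) (m - (j - i)) = q m ∧
    (fun t => if t < i then q t else q (t + (j - i))) 0 = q 0 ∧
    mwsum A k q m = mwsum A k (fun t => if t < i then q t else q (t + (j - i))) (m - (j - i))
      + mwsum A k (fun s => q (i + s)) (j - i) := by
  set d := j - i with hd
  set q' : ℕ → V := fun t => if t < i then q t else q (t + d) with hq'
  have hdj : i + d = j := by omega
  have hqq' : ∀ t, t + 1 ≤ i ∨ i ≤ t → q' t = q t ∨ q' t = q (t + d) := by
    intro t _; by_cases ht : t < i <;> simp [hq', ht]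
  refine ⟨?_, ?_, ?_, ?_⟩
  · intro t ht
    by_cases h1 : t + 1 < i
    · have : q' t = q t := by simp [hq', (show t < i by omega)]
      have h2 : q' (t + 1) = q (t + 1) := by simp [hq', h1]
      rw [this, h2]; exact hw t (by omega)
    · by_cases h2 : t < i
      · -- t + 1 = i
        have hti : t + 1 = i := by omega
        have e1 : q' t = q t := by simp [hq', h2]
        have e2 : q' (t + 1) = q (t + 1) := by
          have : q' (t + 1) = q (t + 1 + d) := by simp [hq', h1]
          rw [this, hti, hdj, ← hq, ← hti]
        rw [e1, e2]; exact hw t (by omega)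
      · have e1 : q' t = q (t + d) := by simp [hq', h2]
        have e2 : q' (t + 1) = q (t + 1 + d) := by simp [hq', h1]
        have : t + 1 + d = (t + d) + 1 := by omega
        rw [e1, e2, this]; exact hw (t + d) (by omega)
  · have h1 : ¬ (m - d < i) := by omega
    have h2 : m - d + d = m := by omega
    simp [hq', h1, h2]
  · by_cases h0 : 0 < i
    · simp [hq', h0]
    · have hi0 : i = 0 := by omega
      have : ¬ (0 < i) := by omega
      simp only [hq', if_neg this]
      rw [Nat.zero_add, hd, hi0, Nat.sub_zero, ← hq, hi0]
  · have S1 := fun (g : ℕ → V) => ∑ t ∈ Finset.Ico 0 i, mwgt A k (g t, g (t + 1))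
    have goalEq : mwsum A k q m = ∑ t ∈ Finset.Ico 0 i, mwgt A k (q t, q (t + 1))
        + ∑ t ∈ Finset.Ico i j, mwgt A k (q t, q (t + 1))
        + ∑ t ∈ Finset.Ico j m, mwgt A k (q t, q (t + 1)) := by
      unfold mwsum
      rw [← Nat.Ico_zero_eq_range, ← Finset.sum_Ico_consecutive _ (Nat.zero_le i) (by omega : i ≤ m),
        ← Finset.sum_Ico_consecutive _ hij.le hjm, add_assoc]
    have outerEq : mwsum A k q' (m - d) = ∑ t ∈ Finset.Ico 0 i, mwgt A k (q t, q (t + 1))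
        + ∑ t ∈ Finset.Ico j m, mwgt A k (q t, q (t + 1)) := by
      unfold mwsum
      rw [← Nat.Ico_zero_eq_range, ← Finset.sum_Ico_consecutive _ (Nat.zero_le i) (by omega : i ≤ m - d)]
      congr 1
      · apply Finset.sum_congr rfl
        intro t ht
        have ht' : t < i := (Finset.mem_Ico.1 ht).2
        have e1 : q' t = q t := by simp [hq', ht']
        by_cases h1 : t + 1 < i
        · rw [e1]; simp [hq', h1]
        · have hti : t + 1 = i := by omega
          have e2 : q' (t + 1) = q (t + 1) := by
            have : q' (t + 1) = q (t + 1 + d) := by simp [hq', h1]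
            rw [this, hti, hdj, ← hq, ← hti]
          rw [e1, e2]
      · have : ∑ t ∈ Finset.Ico i (m - d), mwgt A k (q' t, q' (t + 1))
            = ∑ t ∈ Finset.Ico i (m - d), mwgt A k (q (t + d), q ((t + d) + 1)) := by
          apply Finset.sum_congr rfl
          intro t ht
          have ht' : i ≤ t := (Finset.mem_Ico.1 ht).1
          have e1 : q' t = q (t + d) := by simp [hq', (show ¬ t < i by omega)]
          have e2 : q' (t + 1) = q (t + 1 + d) := by simp [hq', (show ¬ t + 1 < i by omega)]
          rw [e1, e2, show t + 1 + d = (t + d) + 1 by omega]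
        rw [this, Finset.sum_Ico_add' (fun t => mwgt A k (q t, q (t + 1))) i (m - d) d,
          hdj, show m - d + d = m by omega]
    have midEq : mwsum A k (fun s => q (i + s)) d
        = ∑ t ∈ Finset.Ico i j, mwgt A k (q t, q (t + 1)) := by
      show ∑ s ∈ Finset.range d, mwgt A k (q (i + s), q (i + (s + 1))) = _
      rw [← Nat.Ico_zero_eq_range]
      have : ∀ s ∈ Finset.Ico 0 d, mwgt A k (q (i + s), q (i + (s + 1)))
          = mwgt A k (q (s + i), q ((s + i) + 1)) := by
        intro s _; rw [show i + s = s + i by omega, show i + (s+1) = (s + i) + 1 by omega]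
      rw [Finset.sum_congr rfl this,
        Finset.sum_Ico_add' (fun t => mwgt A k (q t, q (t + 1))) 0 d i,
        Nat.zero_add, show d + i = j by omega]
    rw [goalEq, outerEq, midEq]
    ring

lemma mcircuit {A : Set (V × V)} {k : ℕ} (hk : 2 ≤ k)
    (h : ∀ C : Circuit A, C.n ≤ k * C.eta)
    {q : ℕ → V} {m : ℕ} (hm : 2 ≤ m) (hw : MIsWalk A q m) (hc : q m = q 0)
    (hinj : ∀ a < m, ∀ b < m, q a = q b → a = b) :
    mwsum A k q m ≤ 0 := by
  classical
  haveI : NeZero m := ⟨by omega⟩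
  set f : ZMod m → V := fun i => q i.val with hf
  have f_succ : ∀ i : ZMod m, f (i + 1) = q (i.val + 1) := by
    intro i
    have h1 : (i + 1 : ZMod m) = ((i.val + 1 : ℕ) : ZMod m) := by
      rw [Nat.cast_add, ZMod.natCast_zmod_val, Nat.cast_one]
    have h2 : (i + 1 : ZMod m).val = (i.val + 1) % m := by
      rw [h1, ZMod.val_natCast]
    show q ((i + 1 : ZMod m).val) = q (i.val + 1)
    rw [h2]
    rcases lt_or_eq_of_le (Nat.succ_le_of_lt (ZMod.val_lt i)) with hlt | heq
    · rw [Nat.mod_eq_of_lt hlt]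
    · have heq' : i.val + 1 = m := heq
      rw [heq', Nat.mod_self, hc]
  have arc_mem : ∀ i : ZMod m, (f i, f (i + 1)) ∈ MBarc A := by
    intro i
    rw [f_succ]
    exact hw i.val (ZMod.val_lt i)
  set dir : ZMod m → Bool := fun i => decide ((f i, f (i + 1)) ∈ MEarc A) with hdir
  have dir_iff : ∀ i, dir i = true ↔ (f i, f (i + 1)) ∈ MEarc A := by
    intro i; simp [hdir]
  -- handle degenerate 2-cycle with mixed directions separately
  by_cases hdeg : m = 2 ∧ ((q 0, q 1) ∉ MEarc A ∨ (q 1, q 0) ∉ MEarc A)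
  · obtain ⟨hm2, hor⟩ := hdeg
    subst hm2
    have hq2 : q 2 = q 0 := hc
    have : mwsum A k q 2 = mwgt A k (q 0, q 1) + mwgt A k (q 1, q 0) := by
      unfold mwsum
      rw [Finset.sum_range_succ, Finset.sum_range_one, hq2]
    rw [this]
    have hk' : (2:ℤ) ≤ (k:ℤ) := by exact_mod_cast hk
    rcases hor with hno | hno
    · have e1 : mwgt A k (q 0, q 1) = -((k:ℤ) - 1) := by unfold mwgt; rw [if_neg hno]
      have := mwgt_le_one A k (q 1, q 0)
      linarith
    · have e1 : mwgt A k (q 1, q 0) = -((k:ℤ) - 1) := by unfold mwgt; rw [if_neg hno]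
      have := mwgt_le_one A k (q 0, q 1)
      linarith
  · -- main case: build the circuit
    push_neg at hdeg
    have hdir2 : m = 2 → ∀ i : ZMod m, dir i = true := by
      intro hm2 i
      obtain ⟨hE1, hE2⟩ := hdeg hm2
      rw [dir_iff i, show (f i, f (i + 1)) = (q i.val, q (i.val + 1)) from by rw [f_succ]]
      have hv : i.val < 2 := hm2 ▸ ZMod.val_lt i
      have hq2 : q 2 = q 0 := by rw [← hm2]; exact hc
      rcases (show i.val = 0 ∨ i.val = 1 by omega) with hvi | hvi <;> rw [hvi]
      · exact hE1
      · rw [show (1:ℕ) + 1 = 2 from rfl, hq2]; exact hE2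
    have finj : Function.Injective f := by
      intro a b hab
      have ha := ZMod.val_lt a
      have hb := ZMod.val_lt b
      have := hinj a.val ha b.val hb hab
      exact ZMod.val_injective m this
    have fmem : ∀ i : ZMod m, (if dir i then (f i, f (i + 1)) else (f (i + 1), f i)) ∈ A := by
      intro i
      by_cases hE : (f i, f (i + 1)) ∈ MEarc A
      · rw [if_pos ((dir_iff i).2 hE)]; exact hE.2
      · have hd : dir i = false := by
          rw [← Bool.not_eq_true, dir_iff]; exact hE
        rw [hd]
        simp only [Bool.false_eq_true, if_false]
        rcases arc_mem i with hmem | ⟨e, he, hswap⟩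
        · exact absurd hmem hE
        · have : e = (f (i + 1), f i) := by
            have := congrArg Prod.swap hswap
            rwa [Prod.swap_swap] at this
          rw [← this]; exact he.2
    have two_ne : (2 : ZMod m) = 0 → m = 2 := by
      intro h2
      have : (m:ℕ) ∣ 2 := by
        have : ((2 : ℕ) : ZMod m) = 0 := by exact_mod_cast h2
        exact (ZMod.natCast_eq_zero_iff 2 m).1 this
      have := Nat.le_of_dvd (by norm_num) this
      omega
    have einj : Function.Injective
        (fun i : ZMod m => if dir i then (f i, f (i + 1)) else (f (i + 1), f i)) := by
      intro a b hab
      simp only at hab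
      by_cases da : dir a <;> by_cases db : dir b
      · rw [if_pos da, if_pos db, Prod.mk.injEq] at hab
        exact finj hab.1
      · rw [if_pos da, if_neg (by simp [db]), Prod.mk.injEq] at hab
        have h1 : a = b + 1 := finj hab.1
        have h2 : a + 1 = b := finj hab.2
        have h3 : b + 1 = a + 2 := by rw [← h2]; ring
        have h4 : a = a + 2 := h1.trans h3
        have hm2 := two_ne (by linear_combination -h4)
        exact absurd (hdir2 hm2 b) (by simp [db])
      · rw [if_neg (by simp [da]), if_pos db, Prod.mk.injEq] at hab
        have h1 : a + 1 = b := finj hab.1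
        have h2 : a = b + 1 := finj hab.2
        have h3 : b + 1 = a + 2 := by rw [← h1]; ring
        have h4 : a = a + 2 := h2.trans h3
        have hm2 := two_ne (by linear_combination -h4)
        exact absurd (hdir2 hm2 a) (by simp [da])
      · rw [if_neg (by simp [da]), if_neg (by simp [db]), Prod.mk.injEq] at hab
        have := finj hab.1
        exact add_right_cancel this
    set C : Circuit A := ⟨m, hm, f, finj, dir, fmem, einj⟩ with hC
    have hCn := h C
    -- counting
    set Dt : Finset (ZMod m) := Finset.univ.filter (fun i => dir i = true) with hDt
    set Df : Finset (ZMod m) := Finset.univ.filter (fun i => ¬ dir i = true) with hDf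
    have hfwd : C.fwd = Dt.card := by
      rw [Circuit.fwd, Set.ncard_eq_toFinset_card']
      simp [hDt, hC]
      rfl
    have hbwd : C.bwd = Df.card := by
      rw [Circuit.bwd, Set.ncard_eq_toFinset_card']
      simp [hDf, hC]
      rfl
    have hsplit : Dt.card + Df.card = m := by
      rw [hDt, hDf, Finset.card_filter_add_card_filter_not]
      simp [ZMod.card]
    have hsum : mwsum A k q m = (Dt.card : ℤ) * 1 + (Df.card : ℤ) * (-((k:ℤ) - 1)) := by
      have step1 : mwsum A k q m = ∑ i : ZMod m, mwgt A k (f i, f (i + 1)) := by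
        unfold mwsum
        apply Finset.sum_bij (fun (t : ℕ) (_ : t ∈ Finset.range m) => (t : ZMod m))
        · intro a _; exact Finset.mem_univ _
        · intro a ha b hb hab
          have := congrArg ZMod.val hab
          rwa [ZMod.val_cast_of_lt (Finset.mem_range.1 ha),
            ZMod.val_cast_of_lt (Finset.mem_range.1 hb)] at this
        · intro i _
          exact ⟨i.val, Finset.mem_range.2 (ZMod.val_lt i), ZMod.natCast_zmod_val i⟩
        · intro t ht
          have hv : ((t : ZMod m)).val = t := ZMod.val_cast_of_lt (Finset.mem_range.1 ht)
          rw [f_succ, hf]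
          simp only [hv]
      have step2 : ∀ i : ZMod m, mwgt A k (f i, f (i + 1))
          = if dir i = true then (1:ℤ) else -((k:ℤ) - 1) := by
        intro i
        by_cases hE : (f i, f (i + 1)) ∈ MEarc A
        · rw [if_pos ((dir_iff i).2 hE)]; unfold mwgt; rw [if_pos hE]
        · rw [if_neg (fun hd => hE ((dir_iff i).1 hd))]; unfold mwgt; rw [if_neg hE]
      rw [step1, Finset.sum_congr rfl (fun i _ => step2 i),
        Finset.sum_ite, Finset.sum_const, Finset.sum_const]
      simp [hDt, hDf, mul_comm]
    -- conclude
    have hetab : C.eta ≤ Df.card := by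
      rw [Circuit.eta, hbwd]; exact min_le_right _ _
    have hmle : m ≤ k * Df.card := le_trans hCn (Nat.mul_le_mul_left k hetab)
    have hcast : ((Dt.card : ℤ) + (Df.card : ℤ) = (m:ℤ)) := by exact_mod_cast hsplit
    have hcast2 : (m : ℤ) ≤ (k:ℤ) * (Df.card : ℤ) := by exact_mod_cast hmle
    rw [hsum]
    nlinarith [hcast, hcast2]

lemma mclosed {A : Set (V × V)} {k : ℕ} (hk : 2 ≤ k)
    (h : ∀ C : Circuit A, C.n ≤ k * C.eta) :
    ∀ m (q : ℕ → V), MIsWalk A q m → q m = q 0 → mwsum A k q m ≤ 0 := by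
  intro m
  induction m using Nat.strong_induction_on with
  | _ m ih =>
    intro q hw hc
    by_cases hm : 2 ≤ m
    · by_cases hrep : ∃ i, ∃ j, i < j ∧ j ≤ m ∧ (0 < i ∨ j < m) ∧ q i = q j
      · obtain ⟨i, j, hij, hjm, hnd, hq⟩ := hrep
        obtain ⟨hw', hend, hstart, hsum⟩ := mcut k hw hij hjm hq
        have hmid : mwsum A k (fun s => q (i + s)) (j - i) ≤ 0 := by
          apply ih (j - i) (by omega)
          · intro t ht
            exact hw (i + t) (by omega)
          · show q (i + (j - i)) = q (i + 0)
            rw [show i + (j - i) = j by omega, Nat.add_zero]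
            exact hq.symm
        have hout := ih (m - (j - i)) (by omega) _ hw'
          (hend.trans (hc.trans hstart.symm))
        rw [hsum]; linarith
      · push_neg at hrep
        apply mcircuit hk h hm hw hc
        intro a ha b hb hab
        by_contra hne
        rcases Ne.lt_or_gt hne with hl | hl
        · exact hrep a b hl hb.le (Or.inr hb) hab
        · exact hrep b a hl ha.le (Or.inr ha) hab.symm
    · rcases (show m = 0 ∨ m = 1 by omega) with rfl | rfl
      · simp [mwsum]
      · exact absurd hc.symm (MBarc_ne (hw 0 one_pos))

/-- The walk-weight set used to define the Minty potential. -/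
def mpotSet (A : Set (V × V)) (k : ℕ) [Fintype V] (v : V) : Set ℤ :=
  {x : ℤ | ∃ m ≤ Fintype.card V, ∃ q : ℕ → V, MIsWalk A q m ∧ q m = v ∧ x = mwsum A k q m}

/-- The Minty potential. -/
noncomputable def mpot (A : Set (V × V)) (k : ℕ) [Fintype V] (v : V) : ℤ :=
  sSup (mpotSet A k v)

lemma mpotSet_nonempty (A : Set (V × V)) (k : ℕ) [Fintype V] (v : V) :
    (mpotSet A k v).Nonempty :=
  ⟨0, 0, Nat.zero_le _, fun _ => v, fun t ht => absurd ht (Nat.not_lt_zero t), rfl,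
    by simp [mwsum]⟩

lemma mpotSet_bddAbove (A : Set (V × V)) (k : ℕ) [Fintype V] (v : V) :
    BddAbove (mpotSet A k v) := by
  refine ⟨(Fintype.card V : ℤ), ?_⟩
  rintro x ⟨m, hm, q, hw, hq, rfl⟩
  calc mwsum A k q m ≤ (Finset.range m).card • (1:ℤ) :=
        Finset.sum_le_card_nsmul _ _ _ (fun t _ => mwgt_le_one A k _)
    _ = (m : ℤ) := by simp
    _ ≤ _ := by exact_mod_cast hm

lemma mP1 [Fintype V] {A : Set (V × V)} {k : ℕ} (hk : 2 ≤ k)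
    (h : ∀ C : Circuit A, C.n ≤ k * C.eta) :
    ∀ m (q : ℕ → V), MIsWalk A q m → mwsum A k q m ≤ mpot A k (q m) := by
  intro m
  induction m using Nat.strong_induction_on with
  | _ m ih =>
    intro q hw
    by_cases hm : m ≤ Fintype.card V
    · exact le_csSup (mpotSet_bddAbove A k (q m)) ⟨m, hm, q, hw, rfl, rfl⟩
    · obtain ⟨a, b, hab, hqab⟩ := Fintype.exists_ne_map_eq_of_card_lt
        (fun t : Fin (m + 1) => q t) (by simpa using by omega)
      have key : ∀ (i j : ℕ), i < j → j ≤ m → q i = q j →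
          mwsum A k q m ≤ mpot A k (q m) := by
        intro i j hij hjm hq
        obtain ⟨hw', hend, hstart, hsum⟩ := mcut k hw hij hjm hq
        have hmid : mwsum A k (fun s => q (i + s)) (j - i) ≤ 0 :=
          mclosed hk h (j - i) _ (fun t ht => hw (i + t) (by omega))
            (by show q (i + (j - i)) = q (i + 0)
                rw [show i + (j - i) = j by omega, Nat.add_zero]
                exact hq.symm)
        have hout := ih (m - (j - i)) (by omega) _ hw'
        rw [show (if m - (j - i) < i then q (m - (j - i))
          else q (m - (j - i) + (j - i))) = q m from hend] at hout
        rw [hsum]; linarith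
      rcases hab.lt_or_gt with hl | hl
      · exact key a b hl (Nat.lt_succ_iff.mp b.isLt) hqab
      · exact key b a hl (Nat.lt_succ_iff.mp a.isLt) hqab.symm

lemma mP2 [Fintype V] {A : Set (V × V)} {k : ℕ} (hk : 2 ≤ k)
    (h : ∀ C : Circuit A, C.n ≤ k * C.eta) {u v : V} (huv : (u, v) ∈ MBarc A) :
    mpot A k u + mwgt A k (u, v) ≤ mpot A k v := by
  have main : mpot A k u ≤ mpot A k v - mwgt A k (u, v) := by
    apply csSup_le (mpotSet_nonempty A k u)
    rintro x ⟨m, hm, q, hw, hq, rfl⟩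
    set q' : ℕ → V := fun t => if t ≤ m then q t else v with hq'
    have hw' : MIsWalk A q' (m + 1) := by
      intro t ht
      rcases Nat.lt_or_ge t m with h1 | h1
      · have e1 : q' t = q t := by simp [hq', (show t ≤ m by omega)]
        have e2 : q' (t + 1) = q (t + 1) := by simp [hq', (show t + 1 ≤ m by omega)]
        rw [e1, e2]; exact hw t h1
      · have htm : t = m := by omega
        have e1 : q' t = u := by rw [htm]; simp only [hq', le_refl, if_pos]; exact hq
        have e2 : q' (t + 1) = v := by
          rw [htm]; simp [hq', (show ¬ m + 1 ≤ m by omega)]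
        rw [e1, e2]; exact huv
    have hsum : mwsum A k q' (m + 1) = mwsum A k q m + mwgt A k (u, v) := by
      unfold mwsum
      rw [Finset.sum_range_succ]
      congr 1
      · apply Finset.sum_congr rfl
        intro t ht
        have ht' := Finset.mem_range.1 ht
        have e1 : q' t = q t := by simp [hq', (show t ≤ m by omega)]
        have e2 : q' (t + 1) = q (t + 1) := by simp [hq', (show t + 1 ≤ m by omega)]
        rw [e1, e2]
      · have e1 : q' m = u := by simp only [hq', le_refl, if_pos]; exact hq
        have e2 : q' (m + 1) = v := by simp [hq', (show ¬ m + 1 ≤ m by omega)]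
        rw [e1, e2]
    have hle := mP1 hk h (m + 1) q' hw'
    rw [hsum] at hle
    have hv : q' (m + 1) = v := by simp [hq', (show ¬ m + 1 ≤ m by omega)]
    rw [hv] at hle
    linarith
  linarith

/-- Minty: if every circuit satisfies `|C| ≤ k·η(C)` with
`k ≥ 2`, then the chromatic number of the underlying undirected graph is at
most `k`. -/
theorem stmt8 [Fintype V] (A : Set (V × V)) (k : ℕ) (hk : 2 ≤ k)
    (h : ∀ C : Circuit A, C.n ≤ k * C.eta) :
    (SimpleGraph.fromRel (fun u v => (u, v) ∈ A)).chromaticNumber ≤ (k : ℕ∞) := by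
    classical
  haveI : NeZero k := ⟨by omega⟩
  have key : ∀ u v : V, (u, v) ∈ MEarc A →
      ((mpot A k u : ZMod k) ≠ (mpot A k v : ZMod k)) := by
    intro u v hE hcast
    have h1 : (u, v) ∈ MBarc A := Or.inl hE
    have h2 : (v, u) ∈ MBarc A := Or.inr ⟨(u, v), hE, rfl⟩
    have w1 : mwgt A k (u, v) = 1 := by unfold mwgt; rw [if_pos hE]
    have w2 := mwgt_ge A k (v, u) hk
    have p1 := mP2 hk h h1
    have p2 := mP2 hk h h2
    rw [w1] at p1
    have hd1 : (1:ℤ) ≤ mpot A k v - mpot A k u := by linarith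
    have hd2 : mpot A k v - mpot A k u ≤ (k:ℤ) - 1 := by linarith
    have hdvd : (k:ℤ) ∣ (mpot A k v - mpot A k u) := by
      have hz : ((mpot A k v - mpot A k u : ℤ) : ZMod k) = 0 := by
        rw [Int.cast_sub, ← hcast, sub_self]
      exact (ZMod.intCast_zmod_eq_zero_iff_dvd _ k).1 hz
    have hle := Int.le_of_dvd (by linarith) hdvd
    have hk' : (2:ℤ) ≤ (k:ℤ) := by exact_mod_cast hk
    linarith
  let Col : (SimpleGraph.fromRel (fun u v => (u, v) ∈ A)).Coloring (ZMod k) :=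
    SimpleGraph.Coloring.mk (fun v => ((mpot A k v : ℤ) : ZMod k)) (by
      intro u v hadj
      rw [SimpleGraph.fromRel_adj] at hadj
      obtain ⟨hne, hor⟩ := hadj
      rcases hor with hA | hA
      · exact key u v ⟨hne, hA⟩
      · exact (key v u ⟨hne.symm, hA⟩).symm)
  have hcol := Col.colorable
  rw [ZMod.card] at hcol
  exact hcol.chromaticNumber_le
end
end

section
/- Let F be a flat subset of edges of a strongly connected digraph D*. Then the node set of any circuit C of D* can be covered by di-circuits K_1,...,K_q such that the sum over i of |F ∩ K_i| is at most σ_F(C) := φ_F(C) + β_{A∖F}(C). -/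
open scoped BigOperators

noncomputable section

variable {V : Type*}

/-! ### Auxiliary infrastructure for the proof of Statement 9 -/

open Classical in
/-- The number of steps `t ∈ [a, b)` of the walk `p` whose edge lies in `F`. -/
def fcost (F : Set (V × V)) (p : ℕ → V) (a b : ℕ) : ℕ :=
  ((Finset.Ico a b).filter (fun t => (p t, p (t + 1)) ∈ F)).card

lemma fcost_congr {F : Set (V × V)} {p q : ℕ → V} {a b : ℕ}
    (h : ∀ t, a ≤ t → t < b → p t = q t ∧ p (t + 1) = q (t + 1)) :
    fcost F p a b = fcost F q a b := by
  classical
  unfold fcost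
  congr 1
  apply Finset.filter_congr
  intro t ht
  simp only [Finset.mem_Ico] at ht
  rw [(h t ht.1 ht.2).1, (h t ht.1 ht.2).2]

lemma fcost_shift (F : Set (V × V)) (p : ℕ → V) (d a b : ℕ) :
    fcost F (fun t => p (t + d)) a b = fcost F p (a + d) (b + d) := by
  classical
  unfold fcost
  rw [← Finset.map_add_right_Ico, Finset.filter_map, Finset.card_map]
  congr 1
  ext t
  simp only [Finset.mem_filter, Finset.mem_Ico, Function.comp, addRightEmbedding_apply]
  rw [show t + 1 + d = t + d + 1 by omega]

lemma fcost_split (F : Set (V × V)) (p : ℕ → V) {a b c : ℕ} (hab : a ≤ b) (hbc : b ≤ c) :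
    fcost F p a c = fcost F p a b + fcost F p b c := by
  classical
  unfold fcost
  rw [← Finset.Ico_union_Ico_eq_Ico hab hbc, Finset.filter_union,
    Finset.card_union_of_disjoint]
  exact Finset.disjoint_filter_filter (Finset.Ico_disjoint_Ico_consecutive a b c)

lemma zmod_val_cast {n : ℕ} [NeZero n] (k : ZMod n) : ((k.val : ℕ) : ZMod n) = k :=
  ZMod.natCast_rightInverse k

lemma zmod_val_add_one_lt {n : ℕ} [NeZero n] {k : ZMod n} (h : k.val + 1 < n) :
    (k + 1).val = k.val + 1 := by
  conv_lhs => rw [← zmod_val_cast k]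
  rw [show ((k.val : ZMod n) + 1) = ((k.val + 1 : ℕ) : ZMod n) by push_cast; ring]
  exact ZMod.val_cast_of_lt h

lemma zmod_add_one_eq_zero {n : ℕ} [NeZero n] {k : ZMod n} (h : k.val + 1 = n) :
    k + 1 = 0 := by
  conv_lhs => rw [← zmod_val_cast k]
  rw [show ((k.val : ZMod n) + 1) = ((k.val + 1 : ℕ) : ZMod n) by push_cast; ring, h,
    ZMod.natCast_self]

lemma zmod_one_ne_zero {n : ℕ} (hn : 2 ≤ n) : (1 : ZMod n) ≠ 0 := by
  haveI : NeZero n := ⟨by omega⟩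
  intro h
  have h1 : ((1 : ℕ) : ZMod n) = (1 : ZMod n) := by push_cast; ring
  have := congrArg ZMod.val (h1.trans h)
  rw [ZMod.val_cast_of_lt (by omega), ZMod.val_zero] at this
  omega

/-- Build a di-circuit from an injective closed walk. -/
lemma mk_dicircuit {A : Set (V × V)} (p : ℕ → V) (n : ℕ) (hn : 2 ≤ n)
    (hinj : ∀ a < n, ∀ b < n, p a = p b → a = b)
    (hsteps : ∀ t < n, (p t, p (t + 1)) ∈ A)
    (hclose : p n = p 0) :
    ∃ K : DiCircuit A, K.verts = {x | ∃ t < n, p t = x} ∧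
      K.edges = {e | ∃ t < n, e = (p t, p (t + 1))} := by
  haveI : NeZero n := ⟨by omega⟩
  have hval : ∀ k : ZMod n, k.val < n := fun k => ZMod.val_lt k
  have hstep' : ∀ k : ZMod n, p ((k + 1).val) = p (k.val + 1) := by
    intro k
    by_cases h : k.val + 1 < n
    · rw [zmod_val_add_one_lt h]
    · have h2 : k.val + 1 = n := by have := hval k; omega
      rw [zmod_add_one_eq_zero h2, ZMod.val_zero, h2]
      exact hclose.symm
  refine ⟨⟨n, hn, fun k => p k.val, ?_, ?_⟩, ?_, ?_⟩
  · intro a b h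
    have := hinj _ (hval a) _ (hval b) h
    rw [← zmod_val_cast a, ← zmod_val_cast b, this]
  · intro k
    show (p k.val, p ((k + 1).val)) ∈ A
    rw [hstep']
    exact hsteps _ (hval k)
  · ext x
    constructor
    · rintro ⟨k, rfl⟩
      exact ⟨k.val, hval k, rfl⟩
    · rintro ⟨t, ht, rfl⟩
      exact ⟨(t : ZMod n), by show p ((t : ZMod n)).val = p t; rw [ZMod.val_cast_of_lt ht]⟩
  · ext e
    constructor
    · rintro ⟨k, rfl⟩
      exact ⟨k.val, hval k, by show _ = (p k.val, p (k.val + 1)); rw [← hstep']⟩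
    · rintro ⟨t, ht, rfl⟩
      refine ⟨(t : ZMod n), ?_⟩
      show (p t, p (t + 1)) = (p ((t : ZMod n)).val, p (((t : ZMod n) + 1).val))
      rw [hstep', ZMod.val_cast_of_lt ht]

lemma rtg_exists_walk {R : V → V → Prop} {u v : V} (h : Relation.ReflTransGen R u v) :
    ∃ (m : ℕ) (p : ℕ → V), p 0 = u ∧ p m = v ∧ ∀ t < m, R (p t) (p (t + 1)) := by
  induction h with
  | refl => exact ⟨0, fun _ => u, rfl, rfl, by omega⟩
  | @tail b c hub hbc ih =>
    obtain ⟨m, p, h0, hm, hs⟩ := ih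
    refine ⟨m + 1, fun t => if t ≤ m then p t else c, by simp [h0], by simp, ?_⟩
    intro t ht
    by_cases h1 : t < m
    · simp only [show t ≤ m by omega, if_pos, show t + 1 ≤ m by omega]
      simpa [show t ≤ m by omega, show t + 1 ≤ m by omega] using hs t h1
    · have htm : t = m := by omega
      rw [htm]
      simpa [show ¬ (m + 1 ≤ m) by omega] using hm ▸ hbc

/-- Every edge of a strongly connected digraph lies on a di-circuit. -/
lemma exists_dicircuit {A : Set (V × V)} (hsc : StronglyConnected A) {u v : V}
    (he : (u, v) ∈ A) (hne : u ≠ v) : ∃ K : DiCircuit A, (u, v) ∈ K.edges := by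
  classical
  obtain ⟨m1, p1, h10, h1m, h1s⟩ := rtg_exists_walk (hsc v u)
  have hex : ∃ m, ∃ p : ℕ → V, p 0 = v ∧ p m = u ∧ ∀ t < m, (p t, p (t + 1)) ∈ A :=
    ⟨m1, p1, h10, h1m, h1s⟩
  obtain ⟨p, hp0, hpm, hps⟩ := Nat.find_spec hex
  set m := Nat.find hex with hmdef
  have hm1 : 1 ≤ m := by
    rcases Nat.eq_zero_or_pos m with h0' | h
    · exact absurd (show u = v by rw [← hpm, h0', hp0]) hne
    · exact h
  have hinj : ∀ a, a ≤ m → ∀ b, b ≤ m → a < b → p a ≠ p b := by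
    intro a ha b hb hab heq
    have hP : ∃ p' : ℕ → V, p' 0 = v ∧ p' (m - (b - a)) = u ∧
        ∀ t < m - (b - a), (p' t, p' (t + 1)) ∈ A := by
      refine ⟨fun t => if t < a then p t else p (t + (b - a)), ?_, ?_, ?_⟩
      · dsimp only
        split_ifs with h
        · exact hp0
        · have ha0 : a = 0 := by omega
          subst ha0
          rw [Nat.zero_add, Nat.sub_zero, ← heq]
          exact hp0
      · dsimp only
        rw [if_neg (by omega), Nat.sub_add_cancel (by omega)]
        exact hpm
      · intro t ht
        dsimp only
        by_cases h2 : t < a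
        · by_cases h1 : t + 1 < a
          · rw [if_pos h2, if_pos h1]
            exact hps t (by omega)
          · have h3 : t + 1 = a := by omega
            rw [if_pos h2, if_neg h1,
              show t + 1 + (b - a) = b by omega, ← heq, ← h3]
            exact hps t (by omega)
        · rw [if_neg h2, if_neg (by omega), show t + 1 + (b - a) = t + (b - a) + 1 by omega]
          exact hps (t + (b - a)) (by omega)
    exact Nat.find_min hex (by omega) hP
  -- close the walk with the edge (u, v)
  obtain ⟨K, hKv, hKe⟩ := mk_dicircuit (A := A)
    (fun t => if t ≤ m then p t else v) (m + 1) (by omega)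
    (by
      intro a ha b hb h
      rw [if_pos (by omega : a ≤ m), if_pos (by omega : b ≤ m)] at h
      rcases lt_trichotomy a b with h' | h' | h'
      · exact absurd h (hinj a (by omega) b (by omega) h')
      · exact h'
      · exact absurd h.symm (hinj b (by omega) a (by omega) h'))
    (by
      intro t ht
      by_cases h1 : t < m
      · rw [if_pos (by omega : t ≤ m), if_pos (by omega : t + 1 ≤ m)]
        exact hps t h1
      · have htm : t = m := by omega
        rw [htm, if_pos (le_refl m), if_neg (by omega), hpm]
        exact he)
    (by
      show (if m + 1 ≤ m then p (m + 1) else v) = (if 0 ≤ m then p 0 else v)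
      rw [if_neg (by omega), if_pos (Nat.zero_le m), hp0])
  refine ⟨K, ?_⟩
  rw [hKe]
  refine ⟨m, by omega, ?_⟩
  show (u, v) = (if m ≤ m then p m else v, if m + 1 ≤ m then p (m + 1) else v)
  rw [if_pos (le_refl m), if_neg (by omega), hpm]

/-- Any closed walk can be covered by di-circuits of total `F`-cost at most the
`F`-cost of the walk. -/
lemma walk_cover {A : Set (V × V)} (F : Set (V × V)) :
    ∀ m (p : ℕ → V), (∀ t < m, (p t, p (t + 1)) ∈ A ∧ p t ≠ p (t + 1)) → p m = p 0 →
    ∃ (q : ℕ) (K : Fin q → DiCircuit A),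
      (∀ t < m, p t ∈ ⋃ s, (K s).verts) ∧
      ∑ s, ((K s).edges ∩ F).ncard ≤ fcost F p 0 m := by
  intro m
  induction m using Nat.strong_induction_on with
  | _ m IH =>
  intro p hw hc
  rcases Nat.eq_zero_or_pos m with rfl | hm
  · exact ⟨0, Fin.elim0, by intro t ht; omega, by simp⟩
  classical
  have hexj : ∃ j, 0 < j ∧ j ≤ m ∧ ∃ i < j, p i = p j := ⟨m, hm, le_refl m, 0, hm, hc.symm⟩
  obtain ⟨hj0, hjm, i, hij, hpij⟩ := Nat.find_spec hexj
  set j := Nat.find hexj with hjdef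
  have hpinj : ∀ a b, a < b → b < j → p a ≠ p b := by
    intro a b hab hbj heq
    exact Nat.find_min hexj hbj ⟨by omega, by omega, a, hab, heq⟩
  set d := j - i with hd
  have hd2 : 2 ≤ d := by
    by_contra h
    have hd1 : d = 1 := by omega
    have hij' : i = j - 1 := by omega
    have hnl := (hw (j - 1) (by omega)).2
    rw [Nat.sub_add_cancel (by omega)] at hnl
    exact hnl (hij' ▸ hpij)
  obtain ⟨K0, hK0v, hK0e⟩ := mk_dicircuit (A := A) (fun t => p (i + t)) d hd2
    (by
      intro a ha b hb h
      rcases lt_trichotomy a b with h' | h' | h'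
      · exact absurd h (hpinj (i + a) (i + b) (by omega) (by omega))
      · exact h'
      · exact absurd h.symm (hpinj (i + b) (i + a) (by omega) (by omega)))
    (by
      intro t ht
      rw [show i + (t + 1) = i + t + 1 by omega]
      exact (hw (i + t) (by omega)).1)
    (by
      rw [Nat.add_zero, show i + d = j by omega, ← hpij])
  set m' := m - d with hm'
  have hdm : d ≤ m := by omega
  have him' : i ≤ m' := by omega
  set p' : ℕ → V := fun t => if t < i then p t else p (t + d) with hp'
  have hp'0 : p' 0 = p 0 := by
    simp only [hp']
    split_ifs with h
    · rfl
    · have hi0 : i = 0 := by omega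
      rw [Nat.zero_add, show d = j by omega, ← hpij, hi0]
  have hbridge : ∀ t, t + 1 = i → p (t + 1 + d) = p (t + 1) := by
    intro t h3
    rw [h3, show i + d = j by omega, ← hpij]
  have hw' : ∀ t < m', (p' t, p' (t + 1)) ∈ A ∧ p' t ≠ p' (t + 1) := by
    intro t ht
    by_cases h1 : t < i
    · have e1 : p' t = p t := by simp [hp', h1]
      have e2 : p' (t + 1) = p (t + 1) := by
        by_cases h2 : t + 1 < i
        · simp [hp', h2]
        · simp only [hp', if_neg h2]
          exact hbridge t (by omega)
      rw [e1, e2]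
      exact hw t (by omega)
    · have e1 : p' t = p (t + d) := by simp [hp', h1]
      have e2 : p' (t + 1) = p (t + d + 1) := by
        simp only [hp', if_neg (show ¬ t + 1 < i by omega)]
        rw [show t + 1 + d = t + d + 1 by omega]
      rw [e1, e2]
      exact hw (t + d) (by omega)
  have hc' : p' m' = p' 0 := by
    rw [hp'0]
    simp only [hp']
    rw [if_neg (by omega), show m' + d = m by omega]
    exact hc
  obtain ⟨q', K', hcov', hcost'⟩ := IH m' (by omega) p' hw' hc'
  refine ⟨q' + 1, Fin.cases K0 K', ?_, ?_⟩
  · intro t ht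
    by_cases h1 : t < i
    · have he : p t = p' t := by simp [hp', h1]
      rw [he]
      obtain ⟨s, hs⟩ := Set.mem_iUnion.1 (hcov' t (by omega))
      exact Set.mem_iUnion.2 ⟨s.succ, by simpa using hs⟩
    · by_cases h2 : t < j
      · refine Set.mem_iUnion.2 ⟨0, ?_⟩
        simp only [Fin.cases_zero]
        rw [hK0v]
        exact ⟨t - i, by omega, by rw [Nat.add_sub_cancel' (by omega)]⟩
      · have he : p t = p' (t - d) := by
          simp only [hp']
          rw [if_neg (by omega), Nat.sub_add_cancel (by omega)]
        rw [he]
        obtain ⟨s, hs⟩ := Set.mem_iUnion.1 (hcov' (t - d) (by omega))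
        exact Set.mem_iUnion.2 ⟨s.succ, by simpa using hs⟩
  · rw [Fin.sum_univ_succ]
    simp only [Fin.cases_zero, Fin.cases_succ]
    have hsplit : fcost F p 0 m = fcost F p 0 i + fcost F p i j + fcost F p j m := by
      rw [fcost_split F p (Nat.zero_le j) hjm, fcost_split F p (Nat.zero_le i) (by omega : i ≤ j)]
    have hb1 : (K0.edges ∩ F).ncard ≤ fcost F p i j := by
      classical
      have hsub : K0.edges ∩ F ⊆ (fun t => (p t, p (t + 1))) ''
          ↑((Finset.Ico i j).filter (fun t => (p t, p (t + 1)) ∈ F)) := by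
        rintro e ⟨he, hef⟩
        rw [hK0e] at he
        obtain ⟨t, htd, rfl⟩ := he
        have harith : i + (t + 1) = i + t + 1 := by omega
        refine ⟨i + t, ?_, ?_⟩
        · simp only [Finset.coe_filter, Set.mem_setOf_eq, Finset.mem_Ico]
          refine ⟨⟨by omega, by omega⟩, ?_⟩
          rw [show i + t + 1 = i + (t + 1) by omega]
          exact hef
        · dsimp only
          rw [harith]
      calc (K0.edges ∩ F).ncard
          ≤ ((fun t => (p t, p (t + 1))) ''
            ↑((Finset.Ico i j).filter (fun t => (p t, p (t + 1)) ∈ F))).ncard :=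
            Set.ncard_le_ncard hsub ((Finset.finite_toSet _).image _)
        _ ≤ (↑((Finset.Ico i j).filter (fun t => (p t, p (t + 1)) ∈ F)) : Set ℕ).ncard :=
            Set.ncard_image_le (Finset.finite_toSet _)
        _ = fcost F p i j := by rw [Set.ncard_coe_finset]; rfl
    have hb2 : fcost F p' 0 m' = fcost F p 0 i + fcost F p j m := by
      rw [fcost_split F p' (Nat.zero_le i) him']
      congr 1
      · apply fcost_congr
        intro t ht0 hti
        refine ⟨by simp [hp', hti], ?_⟩
        by_cases h : t + 1 < i
        · simp [hp', h]
        · simp only [hp', if_neg h]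
          exact hbridge t (by omega)
      · have e1 : fcost F p' i m' = fcost F (fun t => p (t + d)) i m' := by
          apply fcost_congr
          intro t hti htm
          constructor
          · simp [hp', show ¬ t < i by omega]
          · simp only [hp', if_neg (show ¬ t + 1 < i by omega)]
        rw [e1, fcost_shift, show i + d = j by omega, show m' + d = m by omega]
    calc (K0.edges ∩ F).ncard + ∑ s, ((K' s).edges ∩ F).ncard
        ≤ fcost F p i j + fcost F p' 0 m' := Nat.add_le_add hb1 hcost'
      _ = fcost F p 0 m := by rw [hb2, hsplit]; ring

open Classical in
/-- From a di-circuit through `(u, v)` carrying exactly one `F`-edge, extract the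
path from `v` back to `u` with the appropriate `F`-cost. -/
lemma backward_path {A F : Set (V × V)} {u v : V} (K : DiCircuit A) (j : ZMod K.n)
    (hju : K.f j = u) (hjv : K.f (j + 1) = v)
    (hcard : (K.edges ∩ F).ncard = 1) :
    ∃ (L : ℕ) (p : ℕ → V), 1 ≤ L ∧ p 0 = v ∧ p L = u ∧
      (∀ t < L, (p t, p (t + 1)) ∈ A ∧ p t ≠ p (t + 1)) ∧
      fcost F p 0 L ≤ if (u, v) ∈ F then 0 else 1 := by
  classical
  have hn := K.hn
  haveI : NeZero K.n := ⟨by omega⟩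
  have hone : (1 : ZMod K.n) ≠ 0 := zmod_one_ne_zero hn
  have hcast_inj : ∀ a b : ℕ, a < K.n → b < K.n →
      (a : ZMod K.n) = (b : ZMod K.n) → a = b := by
    intro a b ha hb h
    have := congrArg ZMod.val h
    rwa [ZMod.val_cast_of_lt ha, ZMod.val_cast_of_lt hb] at this
  have hidx_inj : ∀ a b : ℕ, a < K.n - 1 → b < K.n - 1 →
      K.f (j + 1 + (a : ZMod K.n)) = K.f (j + 1 + (b : ZMod K.n)) → a = b := by
    intro a b ha hb h
    exact hcast_inj a b (by omega) (by omega) (add_left_cancel (K.inj h))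
  have hidx_ne : ∀ t : ℕ, t < K.n - 1 → j + 1 + (t : ZMod K.n) ≠ j := by
    intro t ht h
    have h2 : (1 : ZMod K.n) + (t : ZMod K.n) = 0 := by
      have h3 : j + (1 + (t : ZMod K.n)) = j + 0 := by rw [add_zero, ← add_assoc]; exact h
      exact add_left_cancel h3
    have h3 : ((1 + t : ℕ) : ZMod K.n) = ((0 : ℕ) : ZMod K.n) := by
      push_cast
      rw [h2]
    have := hcast_inj (1 + t) 0 (by omega) (by omega) h3
    omega
  set q : ℕ → V := fun t => K.f (j + 1 + (t : ZMod K.n)) with hq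
  have hq1 : ∀ t : ℕ, q (t + 1) = K.f (j + 1 + (t : ZMod K.n) + 1) := by
    intro t
    simp only [hq]
    congr 1
    push_cast
    ring
  have hedge_mem : ∀ t : ℕ, (q t, q (t + 1)) ∈ K.edges := by
    intro t
    rw [hq1 t]
    exact ⟨j + 1 + (t : ZMod K.n), rfl⟩
  obtain ⟨x, hx⟩ := Set.ncard_eq_one.1 hcard
  refine ⟨K.n - 1, q, by omega, ?_, ?_, ?_, ?_⟩
  · simp only [hq, Nat.cast_zero, add_zero]
    exact hjv
  · have hkey : j + 1 + ((K.n - 1 : ℕ) : ZMod K.n) = j := by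
      rw [add_assoc, show (1 : ZMod K.n) + ((K.n - 1 : ℕ) : ZMod K.n) = 0 by
        rw [show (1 : ZMod K.n) = ((1 : ℕ) : ZMod K.n) by push_cast; ring, ← Nat.cast_add,
          show 1 + (K.n - 1) = K.n by omega, ZMod.natCast_self], add_zero]
    simp only [hq]
    rw [hkey, hju]
  · intro t ht
    constructor
    · rw [hq1 t]
      exact K.mem _
    · intro h
      rw [hq1 t] at h
      have h2 : (j + 1 + (t : ZMod K.n)) = (j + 1 + (t : ZMod K.n)) + 1 := K.inj h
      exact hone (left_eq_add.1 h2)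
  · by_cases heF : (u, v) ∈ F
    · have hxe : x = (u, v) := by
        have hmem : (u, v) ∈ K.edges ∩ F := ⟨⟨j, by rw [hju, hjv]⟩, heF⟩
        rw [hx] at hmem
        exact hmem.symm
      rw [if_pos heF, Nat.le_zero]
      unfold fcost
      rw [Finset.card_eq_zero, Finset.filter_eq_empty_iff]
      intro t ht hstep
      simp only [Finset.mem_Ico] at ht
      have hmem : (q t, q (t + 1)) ∈ K.edges ∩ F := ⟨hedge_mem t, hstep⟩
      rw [hx, hxe] at hmem
      have h1 : K.f (j + 1 + (t : ZMod K.n)) = u := congrArg Prod.fst hmem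
      rw [← hju] at h1
      exact hidx_ne t ht.2 (K.inj h1)
    · rw [if_neg heF]
      unfold fcost
      apply Finset.card_le_one.2
      intro a ha b hb
      simp only [Finset.mem_filter, Finset.mem_Ico] at ha hb
      have hea : (q a, q (a + 1)) ∈ K.edges ∩ F := ⟨hedge_mem a, ha.2⟩
      have heb : (q b, q (b + 1)) ∈ K.edges ∩ F := ⟨hedge_mem b, hb.2⟩
      rw [hx] at hea heb
      have h1 : K.f (j + 1 + (a : ZMod K.n)) = K.f (j + 1 + (b : ZMod K.n)) :=
        congrArg Prod.fst (hea.trans heb.symm)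
      exact hidx_inj a b ha.1.2 hb.1.2 h1

/-- for a flat `F` in a strongly connected digraph, the node set
of any circuit `C` can be covered by di-circuits of total `F`-value at most
`σ_F(C) = φ_F(C) + β_{A∖F}(C)`. -/
theorem stmt9 [Fintype V] (A F : Set (V × V)) (hF : F ⊆ A)
    (hsc : StronglyConnected A) (hflat : Flat A F) (C : Circuit A) :
    ∃ (q : ℕ) (K : Fin q → DiCircuit A),
      C.verts ⊆ ⋃ i, (K i).verts ∧
      ∑ i, ((K i).edges ∩ F).ncard ≤ C.fwdCount F + C.bwdCount (A \ F) := by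
  classical
  have hn2 := C.hn
  haveI : NeZero C.n := ⟨by omega⟩
  set c : ZMod C.n → ℕ := fun i =>
    if C.dir i then (if C.edge i ∈ F then 1 else 0) else (if C.edge i ∈ F then 0 else 1)
    with hcdef
  have hone : (1 : ZMod C.n) ≠ 0 := zmod_one_ne_zero hn2
  have hfne : ∀ i : ZMod C.n, C.f i ≠ C.f (i + 1) := by
    intro i h
    have := C.inj h
    exact hone (by
      have h2 : i + 0 = i + 1 := by rw [add_zero]; exact this
      exact (add_left_cancel h2).symm)
  have hseg : ∀ i : ZMod C.n, ∃ (L : ℕ) (p : ℕ → V), 1 ≤ L ∧ p 0 = C.f i ∧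
      p L = C.f (i + 1) ∧ (∀ t < L, (p t, p (t + 1)) ∈ A ∧ p t ≠ p (t + 1)) ∧
      fcost F p 0 L ≤ c i := by
    intro i
    have hA : C.edge i ∈ A := C.mem i
    by_cases hdir : C.dir i
    · -- forward edge: a single step
      have hedge : C.edge i = (C.f i, C.f (i + 1)) := by
        unfold Circuit.edge; rw [if_pos hdir]
      refine ⟨1, fun t => if t = 0 then C.f i else C.f (i + 1), le_refl 1, by simp, by simp, ?_, ?_⟩
      · intro t ht
        have ht0 : t = 0 := by omega
        subst ht0
        simp only [if_pos rfl, if_neg one_ne_zero]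
        exact ⟨hedge ▸ hA, hfne i⟩
      · rw [hcdef]
        simp only [if_pos hdir]
        unfold fcost
        rw [show Finset.Ico 0 1 = {0} from rfl, Finset.filter_singleton]
        by_cases hFe : C.edge i ∈ F
        · rw [if_pos hFe]
          split_ifs <;> simp
        · rw [if_neg hFe, if_neg (by simpa using hedge ▸ hFe), Finset.card_empty]
    · -- backward edge: use flatness
      have hedge : C.edge i = (C.f (i + 1), C.f i) := by
        unfold Circuit.edge; rw [if_neg hdir]
      obtain ⟨K1, hK1⟩ := exists_dicircuit hsc (hedge ▸ hA) (hfne i).symm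
      obtain ⟨K, hKe, hKcard⟩ := hflat _ hA ⟨K1, hedge ▸ hK1⟩
      rw [hedge] at hKe
      obtain ⟨jj, hjj⟩ := hKe
      have hju : K.f jj = C.f (i + 1) := (congrArg Prod.fst hjj).symm
      have hjv : K.f (jj + 1) = C.f i := (congrArg Prod.snd hjj).symm
      obtain ⟨L, p, hL1, hp0, hpL, hpw, hpc⟩ := backward_path K jj hju hjv hKcard
      refine ⟨L, p, hL1, hp0, hpL, hpw, ?_⟩
      refine le_trans hpc (le_of_eq ?_)
      rw [hcdef]
      simp only [if_neg hdir, ← hedge]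
  choose L P hL1 hP0 hPL hPw hPc using hseg
  -- build the concatenated closed walk by induction on the number of segments
  have hbuild : ∀ k, k ≤ C.n → ∃ (m : ℕ) (p : ℕ → V), k ≤ m ∧ p 0 = C.f 0 ∧
      p m = C.f (k : ZMod C.n) ∧
      (∀ t < m, (p t, p (t + 1)) ∈ A ∧ p t ≠ p (t + 1)) ∧
      fcost F p 0 m ≤ ∑ i ∈ Finset.range k, c (i : ZMod C.n) ∧
      (∀ i ≤ k, ∃ t ≤ m, p t = C.f (i : ZMod C.n)) := by
    intro k
    induction k with
    | zero =>
      intro _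
      refine ⟨0, fun _ => C.f 0, le_refl 0, rfl, by simp, by omega, ?_, ?_⟩
      · unfold fcost; simp
      · intro i hi
        have : i = 0 := by omega
        subst this
        exact ⟨0, le_refl 0, by simp⟩
    | succ k ih =>
      intro hk
      obtain ⟨m, p, hkm, h0, hm, hw, hcost, hcov⟩ := ih (by omega)
      set i : ZMod C.n := (k : ZMod C.n) with hidef
      set p2 : ℕ → V := fun t => if t ≤ m then p t else P i (t - m) with hp2
      have hLi := hL1 i
      have hend : p2 (m + L i) = C.f ((k + 1 : ℕ) : ZMod C.n) := by
        simp only [hp2]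
        rw [if_neg (by omega), Nat.add_sub_cancel_left, hPL i]
        congr 1
        push_cast
        ring
      refine ⟨m + L i, p2, by omega, ?_, hend, ?_, ?_, ?_⟩
      · simp only [hp2, if_pos (Nat.zero_le m)]
        exact h0
      · intro t ht
        by_cases h1 : t + 1 ≤ m
        · have e1 : p2 t = p t := by simp [hp2, show t ≤ m by omega]
          have e2 : p2 (t + 1) = p (t + 1) := by simp [hp2, h1]
          rw [e1, e2]
          exact hw t (by omega)
        · have e1 : p2 t = P i (t - m) := by
            by_cases h2 : t ≤ m
            · have htm : t = m := by omega
              simp only [hp2, if_pos h2, htm, Nat.sub_self, hP0 i, hm, ite_self]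
            · simp only [hp2, if_neg h2]
          have e2 : p2 (t + 1) = P i (t - m + 1) := by
            simp only [hp2, if_neg h1]
            rw [show t + 1 - m = t - m + 1 by omega]
          rw [e1, e2]
          exact hPw i (t - m) (by omega)
      · rw [fcost_split F p2 (Nat.zero_le m) (Nat.le_add_right m (L i)), Finset.sum_range_succ]
        apply Nat.add_le_add
        · have he : fcost F p2 0 m = fcost F p 0 m := by
            apply fcost_congr
            intro t ht0 htm
            exact ⟨by simp [hp2, show t ≤ m by omega],
              by simp [hp2, show t + 1 ≤ m by omega]⟩
          rw [he]
          exact hcost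
        · have e1 : fcost F p2 m (m + L i) = fcost F (fun s => P i (s - m)) m (m + L i) := by
            apply fcost_congr
            intro t htm htML
            constructor
            · by_cases h : t ≤ m
              · have htm2 : t = m := by omega
                simp [hp2, htm2, hP0 i, hm, ite_self]
              · simp only [hp2, if_neg h]
            · simp only [hp2, if_neg (show ¬ t + 1 ≤ m by omega)]
          have e4 : fcost F (P i) 0 (L i) = fcost F (fun s => P i (s - m)) m (m + L i) := by
            have e2 := fcost_shift F (fun s => P i (s - m)) m 0 (L i)
            rw [Nat.zero_add, Nat.add_comm (L i) m] at e2
            rw [← e2]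
            apply fcost_congr
            intro t _ _
            constructor <;> · rw [Nat.add_sub_cancel]
          rw [e1, ← e4]
          exact hPc i
      · intro i' hi'
        by_cases h : i' ≤ k
        · obtain ⟨t, htm, hpt⟩ := hcov i' h
          exact ⟨t, by omega, by simp only [hp2, if_pos htm]; exact hpt⟩
        · have : i' = k + 1 := by omega
          subst this
          exact ⟨m + L i, le_refl _, hend⟩
  obtain ⟨m, p, hnm, h0, hm, hw, hcost, hcov⟩ := hbuild C.n (le_refl _)
  have hclosed : p m = p 0 := by
    rw [hm, ZMod.natCast_self, h0]
  obtain ⟨q, K, hKcov, hKcost⟩ := walk_cover F m p hw hclosed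
  refine ⟨q, K, ?_, ?_⟩
  · rintro x ⟨i0, rfl⟩
    obtain ⟨t, htm, hpt⟩ := hcov i0.val (le_of_lt (ZMod.val_lt i0))
    have hx : C.f i0 = p t := by rw [hpt, zmod_val_cast i0]
    rw [hx]
    rcases Nat.lt_or_ge t m with h | h
    · exact hKcov t h
    · have : t = m := by omega
      rw [this, hclosed]
      exact hKcov 0 (by omega)
  · refine le_trans hKcost (le_trans hcost ?_)
    have hrange : ∑ i ∈ Finset.range C.n, c (i : ZMod C.n) = ∑ i : ZMod C.n, c i := by
      refine Finset.sum_nbij' (fun t => (t : ZMod C.n)) (fun k => k.val) ?_ ?_ ?_ ?_ ?_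
      · intro a _; exact Finset.mem_univ _
      · intro a _; exact Finset.mem_range.2 (ZMod.val_lt a)
      · intro a ha
        exact ZMod.val_cast_of_lt (Finset.mem_range.1 ha)
      · intro a _
        exact zmod_val_cast a
      · intro a _
        rfl
    rw [hrange]
    have hsum : ∀ i : ZMod C.n, c i =
        (if C.dir i = true ∧ C.edge i ∈ F then 1 else 0) +
        (if C.dir i = false ∧ C.edge i ∈ A \ F then 1 else 0) := by
      intro i
      have hAe : C.edge i ∈ A := C.mem i
      rw [hcdef]
      by_cases hd : C.dir i <;> by_cases hf : C.edge i ∈ F <;>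
        simp [hd, hf, hAe, Set.mem_diff]
    rw [Finset.sum_congr rfl (fun i _ => hsum i), Finset.sum_add_distrib]
    apply Nat.add_le_add
    · apply le_of_eq
      rw [Finset.sum_boole, Nat.cast_id]
      unfold Circuit.fwdCount
      rw [show {i : ZMod C.n | C.dir i = true ∧ C.edge i ∈ F} =
        ↑(Finset.univ.filter fun i : ZMod C.n => C.dir i = true ∧ C.edge i ∈ F) by
          ext y; simp]
      rw [Set.ncard_coe_finset]
    · apply le_of_eq
      rw [Finset.sum_boole, Nat.cast_id]
      unfold Circuit.bwdCount
      rw [show {i : ZMod C.n | C.dir i = false ∧ C.edge i ∈ A \ F} =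
        ↑(Finset.univ.filter fun i : ZMod C.n => C.dir i = false ∧ C.edge i ∈ A \ F) by
          ext y; simp]
      rw [Set.ncard_coe_finset]
end
end
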